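/- arXiv:1710.11245 — 9 statements merged into one kernel-verified Lean document; each statement's English description precedes it below -/
import Mathlib

section
/- The number of incongruent integer triangles with perimeter n (i.e., multisets {a,b,c} of positive integers with a+b+c=n satisfying the strict triangle inequality) equals the nearest integer to n²/48 if n is even, and the nearest integer to (n+3)²/48 if n is odd. -/
namespace TC

/-- pairs `(x,y)` encoding triples `x ≥ y ≥ z ≥ 1` with `x+y+z = m`, `z = m-x-y`. -/
def P (m : ℕ) : Finset (ℕ × ℕ) :=
  (Finset.range (m+1) ×ˢ Finset.range (m+1)).filter
    (fun p => p.2 ≤ p.1 ∧ m ≤ p.1 + 2 * p.2 ∧ p.1 + p.2 + 1 ≤ m)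

/-- same with `z ≥ 0`. -/
def Q (m : ℕ) : Finset (ℕ × ℕ) :=
  (Finset.range (m+1) ×ˢ Finset.range (m+1)).filter
    (fun p => p.2 ≤ p.1 ∧ m ≤ p.1 + 2 * p.2 ∧ p.1 + p.2 ≤ m)

def E (m : ℕ) : Finset (ℕ × ℕ) :=
  (Finset.range (m+1) ×ˢ Finset.range (m+1)).filter
    (fun p => p.2 ≤ p.1 ∧ p.1 + p.2 = m)

lemma mem_P {m : ℕ} {p : ℕ × ℕ} :
    p ∈ P m ↔ p.2 ≤ p.1 ∧ m ≤ p.1 + 2 * p.2 ∧ p.1 + p.2 + 1 ≤ m := by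
  simp only [P, Finset.mem_filter, Finset.mem_product, Finset.mem_range]
  omega

lemma mem_Q {m : ℕ} {p : ℕ × ℕ} :
    p ∈ Q m ↔ p.2 ≤ p.1 ∧ m ≤ p.1 + 2 * p.2 ∧ p.1 + p.2 ≤ m := by
  simp only [Q, Finset.mem_filter, Finset.mem_product, Finset.mem_range]
  omega

lemma mem_E {m : ℕ} {p : ℕ × ℕ} :
    p ∈ E m ↔ p.2 ≤ p.1 ∧ p.1 + p.2 = m := by
  simp only [E, Finset.mem_filter, Finset.mem_product, Finset.mem_range]
  omega

lemma PQ (m : ℕ) : (P (m+3)).card = (Q m).card := by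
  refine Finset.card_nbij' (fun p => (p.1 - 1, p.2 - 1)) (fun p => (p.1 + 1, p.2 + 1)) ?_ ?_ ?_ ?_ <;>
    rintro ⟨x, y⟩ ha <;>
    simp only [Finset.mem_coe, mem_P, mem_Q, Prod.mk.injEq, and_true] at * <;> omega

lemma QPE (m : ℕ) : (Q m).card = (P m).card + (E m).card := by
  have hu : Q m = P m ∪ E m := by
    ext p; rw [Finset.mem_union, mem_Q, mem_P, mem_E]; omega
  have hd : Disjoint (P m) (E m) := by
    rw [Finset.disjoint_left]
    intro p hp he
    rw [mem_P] at hp; rw [mem_E] at he; omega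
  rw [hu, Finset.card_union_of_disjoint hd]

lemma Ecard (m : ℕ) : (E m).card = m / 2 + 1 := by
  rw [← Finset.card_range (m / 2 + 1)]
  refine Finset.card_nbij' (fun p => p.2) (fun y => (m - y, y)) ?_ ?_ ?_ ?_
  · rintro ⟨x, y⟩ ha; simp only [Finset.mem_coe, mem_E, Finset.mem_range] at *; omega
  · intro a ha; simp only [Finset.mem_coe, mem_E, Finset.mem_range] at *; omega
  · rintro ⟨x, y⟩ ha; simp only [Finset.mem_coe, mem_E, Prod.mk.injEq, and_true] at *; omega
  · intro a _; rfl

lemma Prec (m : ℕ) : (P (m+3)).card = (P m).card + (m / 2 + 1) := by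
  rw [PQ, QPE, Ecard]

lemma arith (m : ℕ) : ((m+3)^2+6)/12 = (m^2+6)/12 + (m/2 + 1) := by
  obtain ⟨q, r, hr, rfl⟩ : ∃ q r, r < 6 ∧ m = 6*q+r := ⟨m/6, m%6, by omega, by omega⟩
  have h1 : (6*q + r + 3)^2 = 36*(q*q) + 12*(r*q) + 36*q + (r+3)*(r+3) := by ring
  have h2 : (6*q + r)^2 = 36*(q*q) + 12*(r*q) + r*r := by ring
  rw [h1, h2]
  generalize q*q = t
  generalize r*q = v
  interval_cases r <;> omega

lemma Pcard (m : ℕ) : (P m).card = (m^2+6)/12 := by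
  induction m using Nat.strong_induction_on with
  | _ m ih =>
    rcases Nat.lt_or_ge m 3 with h3 | h3
    · interval_cases m <;> decide
    obtain ⟨k, rfl⟩ : ∃ k, m = k + 3 := ⟨m - 3, by omega⟩
    · rw [Prec, ih k (by omega), arith]


/-- sorted side pairs `(a,b)` with `c = n - a - b`. -/
def T (n : ℕ) : Finset (ℕ × ℕ) :=
  (Finset.range (n+1) ×ˢ Finset.range (n+1)).filter
    (fun p => 1 ≤ p.1 ∧ p.1 ≤ p.2 ∧ p.1 + 2 * p.2 ≤ n ∧ n < 2 * p.1 + 2 * p.2)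

lemma mem_T {n : ℕ} {p : ℕ × ℕ} :
    p ∈ T n ↔ 1 ≤ p.1 ∧ p.1 ≤ p.2 ∧ p.1 + 2 * p.2 ≤ n ∧ n < 2 * p.1 + 2 * p.2 := by
  simp only [T, Finset.mem_filter, Finset.mem_product, Finset.mem_range]
  omega

lemma TP (n : ℕ) : (T n).card = (P (3 * ((n+1)/2) - n)).card := by
  have hm : 2 * ((n+1)/2) = n ∨ 2 * ((n+1)/2) = n + 1 := by omega
  refine Finset.card_nbij' (fun p => ((n+1)/2 - p.1, (n+1)/2 - p.2))
    (fun p => ((n+1)/2 - p.1, (n+1)/2 - p.2)) ?_ ?_ ?_ ?_ <;>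
    rintro ⟨x, y⟩ ha <;>
    simp only [Finset.mem_coe, mem_P, mem_T, Prod.mk.injEq, and_true] at * <;> omega

lemma sort3 (a b c : ℕ) :
    ∃ x y z, x ≤ y ∧ y ≤ z ∧ ({a, b, c} : Multiset ℕ) = {x, y, z} := by
  have e1 : ({a, b, c} : Multiset ℕ) = {b, a, c} := Multiset.cons_swap a b {c}
  have e2 : ({a, b, c} : Multiset ℕ) = {a, c, b} :=
    congrArg (a ::ₘ ·) (Multiset.cons_swap b c 0)
  have e3 : ({a, b, c} : Multiset ℕ) = {b, c, a} := by
    rw [e1]; exact congrArg (b ::ₘ ·) (Multiset.cons_swap a c 0)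
  have e4 : ({a, b, c} : Multiset ℕ) = {c, a, b} := by
    rw [e2]; exact Multiset.cons_swap a c {b}
  have e5 : ({a, b, c} : Multiset ℕ) = {c, b, a} := by
    rw [e3]; exact Multiset.cons_swap b c {a}
  rcases le_total a b with h1 | h1 <;> rcases le_total b c with h2 | h2 <;>
    rcases le_total a c with h3 | h3
  · exact ⟨a, b, c, h1, h2, rfl⟩
  · exact ⟨a, b, c, h1, h2, rfl⟩
  · exact ⟨a, c, b, h3, h2, e2⟩
  · exact ⟨c, a, b, h3, h1, e4⟩
  · exact ⟨b, a, c, h1, h3, e1⟩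
  · exact ⟨b, c, a, h2, h3, e3⟩
  · exact ⟨c, b, a, h2, h1, e5⟩
  · exact ⟨c, b, a, h2, h1, e5⟩

lemma setEq (n : ℕ) :
    {s : Multiset ℕ | s.card = 3 ∧ s.sum = n ∧ ∀ x ∈ s, 0 < x ∧ 2 * x < n}
      = ↑((T n).image fun p => ({p.1, p.2, n - p.1 - p.2} : Multiset ℕ)) := by
  ext s
  simp only [Set.mem_setOf_eq, Finset.coe_image, Set.mem_image, Finset.mem_coe]
  constructor
  · rintro ⟨hcard, hsum, hmem⟩
    obtain ⟨a, b, c, rfl⟩ := Multiset.card_eq_three.1 hcard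
    obtain ⟨x, y, z, hxy, hyz, heq⟩ := sort3 a b c
    rw [heq] at hsum hmem ⊢
    have hsum' : x + y + z = n := by
      have := hsum
      simp only [Multiset.insert_eq_cons, Multiset.sum_cons, Multiset.sum_singleton] at this
      omega
    have hx := hmem x (by simp)
    have hy := hmem y (by simp)
    have hz := hmem z (by simp)
    refine ⟨(x, y), ?_, ?_⟩
    · rw [mem_T]; simp only; omega
    · have h3 : n - x - y = z := by omega
      simp only [h3]
  · rintro ⟨⟨a, b⟩, hab, rfl⟩
    rw [mem_T] at hab
    simp only at hab ⊢
    refine ⟨rfl, ?_, ?_⟩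
    · simp only [Multiset.insert_eq_cons, Multiset.sum_cons, Multiset.sum_singleton]
      omega
    · intro x hx
      simp only [Multiset.insert_eq_cons, Multiset.mem_cons, Multiset.mem_singleton] at hx
      omega

lemma injOn (n : ℕ) :
    Set.InjOn (fun p : ℕ × ℕ => ({p.1, p.2, n - p.1 - p.2} : Multiset ℕ)) ↑(T n) := by
  rintro ⟨a, b⟩ ha ⟨a', b'⟩ hb h
  rw [Finset.mem_coe, mem_T] at ha hb
  simp only at h ha hb
  have m1 : a ∈ ({a', b', n - a' - b'} : Multiset ℕ) := h ▸ (by simp)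
  have m2 : b ∈ ({a', b', n - a' - b'} : Multiset ℕ) := h ▸ (by simp)
  have m3 : a' ∈ ({a, b, n - a - b} : Multiset ℕ) := h ▸ (by simp)
  have m4 : b' ∈ ({a, b, n - a - b} : Multiset ℕ) := h ▸ (by simp)
  have hs : a + (b + (n - a - b)) = a' + (b' + (n - a' - b')) := by
    have := congrArg Multiset.sum h
    simpa using this
  simp only [Multiset.insert_eq_cons, Multiset.mem_cons, Multiset.mem_singleton] at m1 m2 m3 m4
  simp only [Prod.mk.injEq]
  omega

lemma card_eq (n : ℕ) :
    {s : Multiset ℕ | s.card = 3 ∧ s.sum = n ∧ ∀ x ∈ s, 0 < x ∧ 2 * x < n}.ncard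
      = ((3 * ((n+1)/2) - n)^2 + 6) / 12 := by
  rw [setEq n, Set.ncard_coe_finset, Finset.card_image_of_injOn (injOn n), TP, Pcard]

lemma round12 (k : ℕ) : round ((k : ℚ)^2 / 12) = (((k^2 + 6) / 12 : ℕ) : ℤ) := by
  rw [round_eq]
  rw [show (k : ℚ)^2 / 12 + 1/2 = (((k : ℤ)^2 + 6 : ℤ) : ℚ) / ((12 : ℕ) : ℚ) by
    push_cast; ring]
  rw [Rat.floor_intCast_div_natCast]
  rw [show ((k : ℤ)^2 + 6 : ℤ) = ((k^2 + 6 : ℕ) : ℤ) by push_cast; ring]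
  exact_mod_cast (Int.natCast_div (k^2+6) 12).symm

end TC

/-- The number of incongruent integer triangles with perimeter `n` (multisets `{a,b,c}`
of positive integers summing to `n`, each side less than `n/2`, which is equivalent to
the strict triangle inequality) is the nearest integer to `n²/48` (`n` even) or
`(n+3)²/48` (`n` odd). -/
theorem triangle_count (n : ℕ) (hn : 0 < n) :
    ({s : Multiset ℕ | s.card = 3 ∧ s.sum = n ∧ ∀ x ∈ s, 0 < x ∧ 2 * x < n}.ncard : ℤ)
      = if Even n then round ((n ^ 2 : ℚ) / 48) else round (((n + 3 : ℚ) ^ 2) / 48) := by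
  rw [TC.card_eq n]
  set k := 3 * ((n+1)/2) - n with hk
  by_cases hpar : Even n
  · rw [if_pos hpar]
    obtain ⟨j, hj⟩ := hpar
    have h2k : n = 2 * k := by omega
    rw [show ((n : ℚ)^2 / 48) = (k : ℚ)^2 / 12 by
      rw [show ((n : ℚ)) = 2 * (k : ℚ) by exact_mod_cast congrArg (Nat.cast : ℕ → ℚ) h2k]
      ring]
    exact (TC.round12 k).symm
  · rw [if_neg hpar]
    have hodd : n % 2 = 1 := Nat.odd_iff.1 (Nat.not_even_iff_odd.1 hpar)
    have h2k : n + 3 = 2 * k := by omega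
    rw [show (((n : ℚ) + 3)^2 / 48) = (k : ℚ)^2 / 12 by
      rw [show ((n : ℚ) + 3) = 2 * (k : ℚ) by exact_mod_cast congrArg (Nat.cast : ℕ → ℚ) h2k]
      ring]
    exact (TC.round12 k).symm
end

section
/- For 3≤m≤n, the number of m-element subsets A of {1,...,n} all of whose cyclic gaps are strictly less than n/2 equals binom(n,m) - n·binom(⌊n/2⌋, m-1). -/
/-- A subset `A` of `ZMod n` is *good* if it is nonempty and every cyclic gap between
consecutive elements is strictly less than `n/2`. -/
def GoodSet (n : ℕ) (A : Finset (ZMod n)) : Prop :=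
  A.Nonempty ∧ ∀ i ∈ A, ∃ k : ℕ, 0 < k ∧ 2 * k < n ∧ (i + (k : ZMod n)) ∈ A

/-- `x` witnesses badness: no element of `A` is at cyclic distance in `(0, n/2)` after `x`. -/
def BadWit (n : ℕ) (A : Finset (ZMod n)) (x : ZMod n) : Prop :=
  x ∈ A ∧ ∀ k : ℕ, 0 < k → 2 * k < n → x + (k : ZMod n) ∉ A

section aux

variable {n : ℕ}

lemma zmod_eq_add_val [NeZero n] (x y : ZMod n) : y = x + (((y - x).val : ℕ) : ZMod n) := by
  rw [ZMod.natCast_val, ZMod.cast_id]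
  ring

lemma cast_eq_cast_of_lt [NeZero n] {k k' : ℕ} (hk : k < n) (hk' : k' < n)
    (h : (k : ZMod n) = (k' : ZMod n)) : k = k' := by
  have h1 := ZMod.val_cast_of_lt hk
  have h2 := ZMod.val_cast_of_lt hk'
  rw [← h1, ← h2, h]

lemma wit_dist [NeZero n] {A : Finset (ZMod n)} {x y : ZMod n}
    (hw : BadWit n A x) (hy : y ∈ A) (hyx : y ≠ x) :
    (n + 1) / 2 ≤ (y - x).val ∧ (y - x).val < n := by
  have hlt : (y - x).val < n := ZMod.val_lt _
  have hne : (y - x).val ≠ 0 := by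
    simp [ZMod.val_eq_zero, sub_eq_zero, hyx]
  refine ⟨?_, hlt⟩
  by_contra h
  exact hw.2 _ (Nat.pos_of_ne_zero hne) (by omega)
    (by rw [← zmod_eq_add_val]; exact hy)

lemma wit_unique [NeZero n] {A : Finset (ZMod n)} {x x' : ZMod n}
    (hA : 3 ≤ A.card) (hw : BadWit n A x) (hw' : BadWit n A x') : x = x' := by
  by_contra hne
  obtain ⟨ha1, ha2⟩ := wit_dist hw hw'.1 (Ne.symm hne)
  obtain ⟨hb1, hb2⟩ := wit_dist hw' hw.1 hne
  set a := (x' - x).val with hadef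
  have hxx' : x' - x = ((a : ℕ) : ZMod n) := by
    rw [hadef, ZMod.natCast_val, ZMod.cast_id]
  have hrev : x - x' = (((n - a : ℕ)) : ZMod n) := by
    rw [Nat.cast_sub ha2.le, ZMod.natCast_self, ← hxx']
    ring
  have hrevval : (x - x').val = n - a := by
    rw [hrev, ZMod.val_cast_of_lt (by omega)]
  rw [hrevval] at hb1
  -- third element
  have hx'e : x' ∈ A.erase x := Finset.mem_erase.mpr ⟨Ne.symm hne, hw'.1⟩
  have hcard : 1 ≤ ((A.erase x).erase x').card := by
    rw [Finset.card_erase_of_mem hx'e, Finset.card_erase_of_mem hw.1]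
    omega
  obtain ⟨y, hy⟩ := Finset.card_pos.mp (show 0 < ((A.erase x).erase x').card by omega)
  simp only [Finset.mem_erase] at hy
  obtain ⟨hyx', hyx, hyA⟩ := hy
  obtain ⟨hc1, hc2⟩ := wit_dist hw hyA hyx
  obtain ⟨hd1, hd2⟩ := wit_dist hw' hyA hyx'
  set b := (y - x).val with hbdef
  have hab : a ≤ b := by omega
  have hyb : y - x = ((b : ℕ) : ZMod n) := by
    rw [hbdef, ZMod.natCast_val, ZMod.cast_id]
  have hyx'eq : y - x' = (((b - a : ℕ)) : ZMod n) := by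
    rw [Nat.cast_sub hab, ← hxx', ← hyb]
    ring
  have : (y - x').val = b - a := by
    rw [hyx'eq, ZMod.val_cast_of_lt (by omega)]
  omega

lemma badwit_not_good {A : Finset (ZMod n)} {x : ZMod n} (h : BadWit n A x) :
    ¬ GoodSet n A := by
  rintro ⟨-, hg⟩
  obtain ⟨k, h1, h2, h3⟩ := hg x h.1
  exact h.2 k h1 h2 h3

lemma build_notmem [NeZero n] (x : ZMod n) {S : Finset ℕ}
    (hS : S ⊆ Finset.Ico ((n + 1) / 2) n) :
    x ∉ S.image fun k : ℕ => x + (k : ZMod n) := by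
  intro hx
  obtain ⟨k, hk, hke⟩ := Finset.mem_image.mp hx
  obtain ⟨hk1, hk2⟩ := Finset.mem_Ico.mp (hS hk)
  have : (k : ZMod n) = ((0 : ℕ) : ZMod n) := by
    push_cast
    linear_combination hke
  have := cast_eq_cast_of_lt hk2 (by omega) this
  omega

lemma build_injOn [NeZero n] (x : ZMod n) {S : Finset ℕ}
    (hS : S ⊆ Finset.Ico ((n + 1) / 2) n) :
    Set.InjOn (fun k : ℕ => x + (k : ZMod n)) S := by
  intro k hk k' hk' h
  simp only [Finset.coe_subset, Finset.mem_coe] at *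
  obtain ⟨-, hk2⟩ := Finset.mem_Ico.mp (hS hk)
  obtain ⟨-, hk2'⟩ := Finset.mem_Ico.mp (hS hk')
  exact cast_eq_cast_of_lt hk2 hk2' (by simpa using h)

lemma build_card [NeZero n] (x : ZMod n) {S : Finset ℕ}
    (hS : S ⊆ Finset.Ico ((n + 1) / 2) n) :
    (insert x (S.image fun k : ℕ => x + (k : ZMod n))).card = S.card + 1 := by
  rw [Finset.card_insert_of_notMem (build_notmem x hS),
    Finset.card_image_of_injOn (build_injOn x hS)]

lemma build_badwit [NeZero n] (x : ZMod n) {S : Finset ℕ}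
    (hS : S ⊆ Finset.Ico ((n + 1) / 2) n) :
    BadWit n (insert x (S.image fun k : ℕ => x + (k : ZMod n))) x := by
  refine ⟨Finset.mem_insert_self _ _, ?_⟩
  intro k hk0 hkn hmem
  rcases Finset.mem_insert.mp hmem with h | h
  · have : (k : ZMod n) = ((0 : ℕ) : ZMod n) := by
      push_cast
      linear_combination h
    have := cast_eq_cast_of_lt (by omega) (by omega) this
    omega
  · obtain ⟨k', hk', hke⟩ := Finset.mem_image.mp h
    obtain ⟨hk1', hk2'⟩ := Finset.mem_Ico.mp (hS hk')
    have : (k' : ZMod n) = (k : ZMod n) := by linear_combination hke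
    have := cast_eq_cast_of_lt hk2' (by omega) this
    omega

lemma recover_S [NeZero n] (x : ZMod n) {S : Finset ℕ}
    (hS : S ⊆ Finset.Ico ((n + 1) / 2) n) :
    ((insert x (S.image fun k : ℕ => x + (k : ZMod n))).erase x).image
      (fun y => (y - x).val) = S := by
  rw [Finset.erase_insert (build_notmem x hS), Finset.image_image]
  have : ∀ k ∈ S, ((fun y : ZMod n => (y - x).val) ∘ fun k : ℕ => x + (k : ZMod n)) k = id k := by
    intro k hk
    obtain ⟨-, hk2⟩ := Finset.mem_Ico.mp (hS hk)
    simp only [Function.comp_apply, id_eq]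
    rw [add_sub_cancel_left, ZMod.val_cast_of_lt hk2]
  rw [Finset.image_congr this, Finset.image_id]

lemma decompose_bad [NeZero n] {A : Finset (ZMod n)} (hA : A.Nonempty)
    (hbad : ¬ GoodSet n A) :
    ∃ x S, S ⊆ Finset.Ico ((n + 1) / 2) n ∧ S.card + 1 = A.card ∧
      A = insert x (S.image fun k : ℕ => x + (k : ZMod n)) := by
  rw [GoodSet] at hbad
  push_neg at hbad
  obtain ⟨x, hx, hw⟩ := hbad hA
  have hwit : BadWit n A x := ⟨hx, fun k h1 h2 h3 => (hw k h1 h2 h3).elim⟩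
  refine ⟨x, (A.erase x).image (fun y => (y - x).val), ?_, ?_, ?_⟩
  · intro k hk
    obtain ⟨y, hy, hye⟩ := Finset.mem_image.mp hk
    obtain ⟨hyx, hyA⟩ := Finset.mem_erase.mp hy
    obtain ⟨h1, h2⟩ := wit_dist hwit hyA hyx
    exact Finset.mem_Ico.mpr (by omega)
  · have hinj : Set.InjOn (fun y : ZMod n => (y - x).val) (A.erase x) := by
      intro y hy y' hy' h
      simp only at h
      calc y = x + (((y - x).val : ℕ) : ZMod n) := zmod_eq_add_val x y
        _ = x + (((y' - x).val : ℕ) : ZMod n) := by rw [h]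
        _ = y' := (zmod_eq_add_val x y').symm
    rw [Finset.card_image_of_injOn hinj, Finset.card_erase_of_mem hx]
    have := Finset.card_pos.mpr hA
    omega
  · have him : ((A.erase x).image (fun y => (y - x).val)).image
        (fun k : ℕ => x + (k : ZMod n)) = A.erase x := by
      rw [Finset.image_image]
      have : ∀ y ∈ A.erase x,
          ((fun k : ℕ => x + (k : ZMod n)) ∘ fun y : ZMod n => (y - x).val) y = id y := by
        intro y hy
        simp only [Function.comp_apply, id_eq]
        exact (zmod_eq_add_val x y).symm
      rw [Finset.image_congr this, Finset.image_id]
    rw [him, Finset.insert_erase hx]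

end aux

/-- For `3 ≤ m ≤ n`, the number of good `m`-element subsets of `{1,…,n}` is
`C(n,m) - n·C(⌊n/2⌋, m-1)`. -/
theorem good_m_subsets (n m : ℕ) (hm : 3 ≤ m) (hmn : m ≤ n) :
    ({A : Finset (ZMod n) | A.card = m ∧ GoodSet n A}.ncard : ℤ)
      = n.choose m - n * (n / 2).choose (m - 1) := by
  classical
  haveI : NeZero n := ⟨by omega⟩
  set f : ZMod n × Finset ℕ → Finset (ZMod n) :=
    fun p => insert p.1 (p.2.image fun k : ℕ => p.1 + (k : ZMod n)) with hf
  set D : Finset (ZMod n × Finset ℕ) :=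
    Finset.univ ×ˢ (Finset.Ico ((n + 1) / 2) n).powersetCard (m - 1) with hD
  have hDmem : ∀ p ∈ D, p.2 ⊆ Finset.Ico ((n + 1) / 2) n ∧ p.2.card = m - 1 := by
    intro p hp
    rw [hD, Finset.mem_product, Finset.mem_powersetCard] at hp
    exact ⟨hp.2.1, hp.2.2⟩
  set B : Finset (Finset (ZMod n)) :=
    (Finset.univ.powersetCard m).filter (fun A => ¬ GoodSet n A) with hB
  set G : Finset (Finset (ZMod n)) :=
    (Finset.univ.powersetCard m).filter (fun A => GoodSet n A) with hG
  -- the good set is ↑G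
  have hGset : {A : Finset (ZMod n) | A.card = m ∧ GoodSet n A} = ↑G := by
    ext A
    simp [hG, Finset.mem_powersetCard, and_comm]
  -- image of f on D is B
  have hcardf : ∀ p ∈ D, (f p).card = m := by
    intro p hp
    obtain ⟨h1, h2⟩ := hDmem p hp
    rw [hf]
    rw [build_card p.1 h1, h2]
    omega
  have himg : D.image f = B := by
    apply Finset.Subset.antisymm
    · intro A hA1
      obtain ⟨p, hp, hpe⟩ := Finset.mem_image.mp hA1
      obtain ⟨h1, h2⟩ := hDmem p hp
      rw [hB, Finset.mem_filter, Finset.mem_powersetCard]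
      refine ⟨⟨Finset.subset_univ _, by rw [← hpe]; exact hcardf p hp⟩, ?_⟩
      rw [← hpe]
      exact badwit_not_good (build_badwit p.1 h1)
    · intro A hA
      rw [hB, Finset.mem_filter, Finset.mem_powersetCard] at hA
      obtain ⟨⟨-, hAcard⟩, hAbad⟩ := hA
      obtain ⟨x, S, hS1, hS2, hS3⟩ :=
        decompose_bad (Finset.card_pos.mp (by omega)) hAbad
      refine Finset.mem_image.mpr ⟨(x, S), ?_, hS3.symm⟩
      rw [hD, Finset.mem_product, Finset.mem_powersetCard]
      exact ⟨Finset.mem_univ _, hS1, show S.card = m - 1 by omega⟩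
  have hinj : Set.InjOn f D := by
    intro p hp q hq hpq
    simp only [Finset.mem_coe] at hp hq
    obtain ⟨hp1, hp2⟩ := hDmem p hp
    obtain ⟨hq1, hq2⟩ := hDmem q hq
    have hwp : BadWit n (f p) p.1 := build_badwit p.1 hp1
    have hwq : BadWit n (f p) q.1 := hpq ▸ build_badwit q.1 hq1
    have hx : p.1 = q.1 := wit_unique (by rw [hcardf p hp]; omega) hwp hwq
    have hsnd : p.2 = q.2 := by
      have := recover_S p.1 hp1
      rw [hf] at hpq
      simp only at hpq
      rw [hpq, hx] at this
      rw [← this, recover_S q.1 hq1]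
    exact Prod.ext hx hsnd
  have hBcard : B.card = n * (n / 2).choose (m - 1) := by
    rw [← himg, Finset.card_image_of_injOn hinj, hD, Finset.card_product,
      Finset.card_univ, ZMod.card, Finset.card_powersetCard, Nat.card_Ico]
    congr 2
    omega
  have hsum : G.card + B.card = n.choose m := by
    rw [hG, hB, Finset.card_filter_add_card_filter_not,
      Finset.card_powersetCard, Finset.card_univ, ZMod.card]
  rw [hGset, Set.ncard_coe_finset]
  have hle : B.card ≤ n.choose m := by omega
  omega
end

section
/- For n≥3, the number of subsets A of {1,...,n} with |A|≥1 such that all cyclic gaps of A are strictly less than n/2 equals 2ⁿ - 1 - n·2^⌊n/2⌋ + n/2 when n is even, and 2ⁿ - 1 - n·2^⌊n/2⌋ when n is odd. -/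
set_option linter.unusedSectionVars false
set_option maxHeartbeats 1000000

namespace GoodAux
variable {n : ℕ} [NeZero n]

def t (n : ℕ) : ℕ := (n - 1) / 2

lemma k_iff (hn : 1 ≤ n) (k : ℕ) : (0 < k ∧ 2 * k < n) ↔ k ∈ Finset.Icc 1 (t n) := by
  simp only [Finset.mem_Icc, t]; omega

lemma cast_inj_of_lt {a b : ℕ} (ha : a < n) (hb : b < n) (h : (a : ZMod n) = (b : ZMod n)) :
    a = b := by
  have h2 : a % n = b % n := (ZMod.natCast_eq_natCast_iff a b n).1 h
  rwa [Nat.mod_eq_of_lt ha, Nat.mod_eq_of_lt hb] at h2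

lemma cast_ne_zero {k : ℕ} (hk0 : 0 < k) (hkn : k < n) : (k : ZMod n) ≠ 0 := by
  intro h
  have := Nat.le_of_dvd hk0 ((ZMod.natCast_eq_zero_iff k n).1 h)
  omega

lemma add_cast_ne {i : ZMod n} {k : ℕ} (hk0 : 0 < k) (hkn : k < n) : i + (k : ZMod n) ≠ i := by
  intro h
  exact cast_ne_zero hk0 hkn (by linear_combination h)

lemma shift (i a : ZMod n) : a = i + (((a - i).val : ℕ) : ZMod n) := by
  rw [ZMod.natCast_rightInverse (a - i)]; ring

def B (n : ℕ) [NeZero n] (i : ZMod n) : Finset (Finset (ZMod n)) :=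
  Finset.univ.filter (fun A => i ∈ A ∧ ∀ k ∈ Finset.Icc 1 (t n), i + (k : ZMod n) ∉ A)

lemma mem_B {i : ZMod n} {A : Finset (ZMod n)} :
    A ∈ B n i ↔ i ∈ A ∧ ∀ k ∈ Finset.Icc 1 (t n), i + (k : ZMod n) ∉ A := by
  simp [B]

lemma card_B (hn : 3 ≤ n) (i : ZMod n) : (B n i).card = 2 ^ (n / 2) := by
  classical
  have htn : t n + 1 ≤ n := by simp only [t]; omega
  set f : ℕ → ZMod n := fun k => i + (k : ZMod n) with hf
  set block : Finset (ZMod n) := (Finset.range (t n + 1)).image f with hblock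
  have hib : i ∈ block := by
    simp only [hblock, Finset.mem_image, hf]
    exact ⟨0, by simp [Finset.mem_range], by simp⟩
  have hcardb : block.card = t n + 1 := by
    rw [hblock, Finset.card_image_of_injOn, Finset.card_range]
    intro a ha b hb hab
    simp only [Finset.mem_coe, Finset.mem_range] at ha hb
    exact cast_inj_of_lt (by omega) (by omega) (add_left_cancel hab)
  have himg : B n i = (blockᶜ).powerset.image (fun S => insert i S) := by
    ext A
    simp only [mem_B, Finset.mem_image, Finset.mem_powerset]
    constructor
    · rintro ⟨hiA, hgap⟩
      refine ⟨A \ block, ?_, ?_⟩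
      · intro x hx
        simp only [Finset.mem_sdiff] at hx
        exact Finset.mem_compl.2 hx.2
      · ext x
        simp only [Finset.mem_insert, Finset.mem_sdiff]
        constructor
        · rintro (rfl | ⟨h, _⟩) <;> assumption
        · intro hx
          by_cases hxb : x ∈ block
          · left
            simp only [hblock, Finset.mem_image, Finset.mem_range, hf] at hxb
            obtain ⟨k, hk, rfl⟩ := hxb
            rcases Nat.eq_zero_or_pos k with rfl | hk0
            · simp
            · exact absurd hx (hgap k (Finset.mem_Icc.2 ⟨hk0, by omega⟩))
          · right; exact ⟨hx, hxb⟩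
    · rintro ⟨S, hS, rfl⟩
      refine ⟨Finset.mem_insert_self _ _, ?_⟩
      intro k hk
      rw [Finset.mem_Icc] at hk
      intro hmem
      rcases Finset.mem_insert.1 hmem with h | h
      · exact add_cast_ne (n := n) (by omega) (by omega) h
      · have hin : i + (k : ZMod n) ∈ block := by
          simp only [hblock, Finset.mem_image, Finset.mem_range, hf]
          exact ⟨k, by omega, rfl⟩
        exact (Finset.mem_compl.1 (hS h)) hin
  rw [himg, Finset.card_image_of_injOn, Finset.card_powerset, Finset.card_compl,
    hcardb, ZMod.card]
  · congr 1
    simp only [t]; omega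
  · intro S hS T hT hST
    simp only [Finset.mem_coe, Finset.mem_powerset] at hS hT
    have hiS : i ∉ S := fun h => (Finset.mem_compl.1 (hS h)) hib
    have hiT : i ∉ T := fun h => (Finset.mem_compl.1 (hT h)) hib
    have := congrArg (fun A : Finset (ZMod n) => A.erase i) hST
    simpa [Finset.erase_insert hiS, Finset.erase_insert hiT] using this

lemma key (hn : 3 ≤ n) {i j : ZMod n} (hij : i ≠ j) {A : Finset (ZMod n)}
    (hAi : A ∈ B n i) (hAj : A ∈ B n j) :
    Even n ∧ j = i + ((n / 2 : ℕ) : ZMod n) ∧ A = {i, j} := by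
  obtain ⟨hiA, hgi⟩ := mem_B.1 hAi
  obtain ⟨hjA, hgj⟩ := mem_B.1 hAj
  set d := (j - i).val with hdd
  set c := (i - j).val with hcc
  have hd : j = i + (d : ZMod n) := shift i j
  have hc : i = j + (c : ZMod n) := shift j i
  have hdn : d < n := ZMod.val_lt _
  have hcn : c < n := ZMod.val_lt _
  have hd0 : d ≠ 0 := by
    intro h
    rw [hdd, ZMod.val_eq_zero] at h
    exact hij (sub_eq_zero.1 h).symm
  have hc0 : c ≠ 0 := by
    intro h
    rw [hcc, ZMod.val_eq_zero] at h
    exact hij (sub_eq_zero.1 h)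
  have hdt : ¬(1 ≤ d ∧ d ≤ t n) := fun hh =>
    hgi d (Finset.mem_Icc.2 hh) (hd ▸ hjA)
  have hct : ¬(1 ≤ c ∧ c ≤ t n) := fun hh =>
    hgj c (Finset.mem_Icc.2 hh) (hc ▸ hiA)
  have hsum : ((d + c : ℕ) : ZMod n) = 0 := by
    push_cast
    rw [hdd, hcc, ZMod.natCast_rightInverse, ZMod.natCast_rightInverse]
    ring
  have hdvd : n ∣ d + c := (ZMod.natCast_eq_zero_iff _ n).1 hsum
  have hdc : d + c = n := Nat.eq_of_dvd_of_lt_two_mul (by omega) hdvd (by omega)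
  have htn : t n = (n - 1) / 2 := rfl
  have heven : n % 2 = 0 := by omega
  have hd2 : d = n / 2 := by omega
  refine ⟨Nat.even_iff.2 heven, by rw [hd, hd2], ?_⟩
  ext a
  simp only [Finset.mem_insert, Finset.mem_singleton]
  constructor
  · intro ha
    set e := (a - i).val with hee
    have hae : a = i + (e : ZMod n) := shift i a
    have hen : e < n := ZMod.val_lt _
    set e' := (a - j).val with hee'
    have hae' : a = j + ((e' : ℕ) : ZMod n) := shift j a
    have hen' : e' < n := ZMod.val_lt _
    have het : ¬(1 ≤ e ∧ e ≤ t n) := fun hh =>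
      hgi e (Finset.mem_Icc.2 hh) (hae ▸ ha)
    have het' : ¬(1 ≤ e' ∧ e' ≤ t n) := fun hh =>
      hgj e' (Finset.mem_Icc.2 hh) (hae' ▸ ha)
    have hrel : ((e + c : ℕ) : ZMod n) = ((e' : ℕ) : ZMod n) := by
      push_cast
      rw [hee, hcc, hee', ZMod.natCast_rightInverse, ZMod.natCast_rightInverse,
        ZMod.natCast_rightInverse]
      ring
    have hmod : (e + c) % n = e' % n := (ZMod.natCast_eq_natCast_iff _ _ n).1 hrel
    rw [Nat.mod_eq_of_lt hen'] at hmod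
    have hcases : e' = e + c ∨ e' = e + c - n := by
      rcases lt_or_ge (e + c) n with h | h
      · left; rw [Nat.mod_eq_of_lt h] at hmod; omega
      · right
        rw [Nat.mod_eq_sub_mod h, Nat.mod_eq_of_lt (by omega)] at hmod
        omega
    have : e = 0 ∨ e = d := by omega
    rcases this with h0 | hD
    · left; rw [hae, h0]; simp
    · right; rw [hae, hD]; exact hd.symm
  · rintro (rfl | rfl) <;> assumption

/-! ### The union of bad sets -/

def Bad (n : ℕ) [NeZero n] : Finset (Finset (ZMod n)) := Finset.univ.biUnion (B n)

lemma bad_nonempty {A : Finset (ZMod n)} (hA : A ∈ Bad n) : A.Nonempty := by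
  obtain ⟨i, _, hi⟩ := Finset.mem_biUnion.1 hA
  exact ⟨i, (mem_B.1 hi).1⟩

/-- card of nonempty subsets -/
lemma card_nonempty_sets :
    (Finset.univ.filter (fun A : Finset (ZMod n) => A.Nonempty)).card = 2 ^ n - 1 := by
  classical
  have : (Finset.univ.filter (fun A : Finset (ZMod n) => A.Nonempty))
      = Finset.univ.erase (∅ : Finset (ZMod n)) := by
    ext A
    simp [Finset.mem_erase, Finset.nonempty_iff_ne_empty, and_comm]
  rw [this, Finset.card_erase_of_mem (Finset.mem_univ _), Finset.card_univ,
    Fintype.card_finset, ZMod.card]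

/-- odd case: the bad families are pairwise disjoint -/
lemma card_bad_odd (hn : 3 ≤ n) (hodd : ¬ Even n) : (Bad n).card = n * 2 ^ (n / 2) := by
  classical
  rw [Bad, Finset.card_biUnion]
  · simp [card_B hn, Finset.card_univ, ZMod.card]
  · intro i _ j _ hij
    rw [Function.onFun, Finset.disjoint_left]
    intro A hAi hAj
    exact hodd (key hn hij hAi hAj).1


/-! ### Even case -/

def pairSet (n : ℕ) [NeZero n] (i : ZMod n) : Finset (ZMod n) :=
  {i, i + ((n / 2 : ℕ) : ZMod n)}

def P (n : ℕ) [NeZero n] : Finset (Finset (ZMod n)) := Finset.univ.image (pairSet n)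

lemma half_pos (hn : 3 ≤ n) : 0 < n / 2 := by omega

lemma half_lt (hn : 3 ≤ n) : n / 2 < n := by omega

lemma shift_ne (hn : 3 ≤ n) (i : ZMod n) : i + ((n / 2 : ℕ) : ZMod n) ≠ i :=
  add_cast_ne (half_pos hn) (half_lt hn)

lemma two_half (he : Even n) :
    ((n / 2 : ℕ) : ZMod n) + ((n / 2 : ℕ) : ZMod n) = 0 := by
  rw [← Nat.cast_add]
  have h2 : n / 2 + n / 2 = n := by
    have := Nat.even_iff.1 he; omega
  rw [h2, ZMod.natCast_self]

lemma pairSet_shift (he : Even n) (i : ZMod n) :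
    pairSet n (i + ((n / 2 : ℕ) : ZMod n)) = pairSet n i := by
  unfold pairSet
  rw [add_assoc, two_half he, add_zero, Finset.pair_comm]

lemma card_P (hn : 3 ≤ n) (he : Even n) : (P n).card = n / 2 := by
  classical
  have hfib : ∀ A ∈ P n,
      (Finset.univ.filter (fun j : ZMod n => pairSet n j = A)).card = 2 := by
    intro A hA
    obtain ⟨i, _, rfl⟩ := Finset.mem_image.1 hA
    have hset : (Finset.univ.filter (fun j : ZMod n => pairSet n j = pairSet n i))
        = {i, i + ((n / 2 : ℕ) : ZMod n)} := by
      ext j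
      simp only [Finset.mem_filter, Finset.mem_univ, true_and, Finset.mem_insert,
        Finset.mem_singleton]
      constructor
      · intro h
        have : j ∈ pairSet n i := h ▸ Finset.mem_insert_self j _
        simpa [pairSet] using this
      · rintro (rfl | rfl)
        · rfl
        · exact pairSet_shift he i
    rw [hset, Finset.card_pair (shift_ne hn i).symm]
  have hcount := Finset.card_eq_sum_card_image (pairSet n) (Finset.univ : Finset (ZMod n))
  rw [Finset.card_univ, ZMod.card] at hcount
  have hsum : n = ∑ A ∈ P n, 2 := hcount.trans (Finset.sum_congr rfl hfib)
  rw [Finset.sum_const, smul_eq_mul] at hsum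
  omega

lemma tn_even (hn : 3 ≤ n) (he : Even n) : t n = n / 2 - 1 := by
  have := Nat.even_iff.1 he
  simp only [t]; omega

lemma pairSet_mem_B (hn : 3 ≤ n) (he : Even n) (i : ZMod n) : pairSet n i ∈ B n i := by
  rw [mem_B]
  refine ⟨Finset.mem_insert_self _ _, ?_⟩
  intro k hk hmem
  rw [Finset.mem_Icc] at hk
  have hkn : k < n := by have := tn_even hn he; omega
  rcases Finset.mem_insert.1 hmem with h | h
  · exact add_cast_ne (n := n) (by omega) hkn h
  · rw [Finset.mem_singleton] at h
    have : k = n / 2 := cast_inj_of_lt hkn (half_lt hn) (add_left_cancel h)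
    have := tn_even hn he
    omega

lemma inter_P (hn : 3 ≤ n) (he : Even n) (i : ZMod n) :
    B n i ∩ P n = {pairSet n i} := by
  classical
  ext A
  simp only [Finset.mem_inter, Finset.mem_singleton]
  constructor
  · rintro ⟨hB, hP⟩
    obtain ⟨j, _, rfl⟩ := Finset.mem_image.1 hP
    have hiA : i ∈ pairSet n j := (mem_B.1 hB).1
    rcases Finset.mem_insert.1 hiA with h | h
    · rw [h]
    · rw [Finset.mem_singleton] at h
      have hji : j = i + ((n / 2 : ℕ) : ZMod n) := by
        rw [h, add_assoc, two_half he, add_zero]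
      rw [hji, pairSet_shift he]
  · rintro rfl
    exact ⟨pairSet_mem_B hn he i, Finset.mem_image_of_mem _ (Finset.mem_univ i)⟩

lemma card_bad_even (hn : 3 ≤ n) (he : Even n) :
    (Bad n).card + n = n * 2 ^ (n / 2) + n / 2 := by
  classical
  have hdecomp : Bad n = (Finset.univ.biUnion (fun i => B n i \ P n)) ∪ P n := by
    ext A
    simp only [Bad, Finset.mem_union, Finset.mem_biUnion, Finset.mem_univ, true_and]
    constructor
    · rintro ⟨i, hi⟩
      by_cases hP : A ∈ P n
      · exact Or.inr hP
      · exact Or.inl ⟨i, Finset.mem_sdiff.2 ⟨hi, hP⟩⟩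
    · rintro (⟨i, hi⟩ | hP)
      · exact ⟨i, (Finset.mem_sdiff.1 hi).1⟩
      · obtain ⟨j, _, rfl⟩ := Finset.mem_image.1 hP
        exact ⟨j, pairSet_mem_B hn he j⟩
  have hdisj : Disjoint (Finset.univ.biUnion (fun i => B n i \ P n)) (P n) := by
    rw [Finset.disjoint_left]
    intro A hA hP
    obtain ⟨i, _, hi⟩ := Finset.mem_biUnion.1 hA
    exact (Finset.mem_sdiff.1 hi).2 hP
  have hpair : ∀ i : ZMod n, (B n i \ P n).card + 1 = 2 ^ (n / 2) := by
    intro i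
    have h1 := Finset.card_inter_add_card_sdiff (B n i) (P n)
    rw [inter_P hn he i, Finset.card_singleton, card_B hn i] at h1
    omega
  have hbi : (Finset.univ.biUnion (fun i => B n i \ P n)).card + n = n * 2 ^ (n / 2) := by
    rw [Finset.card_biUnion]
    · have hs : ∑ i : ZMod n, ((B n i \ P n).card + 1) = ∑ _i : ZMod n, 2 ^ (n / 2) :=
        Finset.sum_congr rfl (fun i _ => hpair i)
      rw [Finset.sum_add_distrib, Finset.sum_const, Finset.sum_const, Finset.card_univ,
        ZMod.card, smul_eq_mul, smul_eq_mul, mul_one] at hs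
      exact hs
    · intro i _ j _ hij
      rw [Function.onFun, Finset.disjoint_left]
      intro A hAi hAj
      rw [Finset.mem_sdiff] at hAi hAj
      obtain ⟨heq, hj2, hA2⟩ := key hn hij hAi.1 hAj.1
      apply hAi.2
      have : A = pairSet n i := by rw [hA2, hj2]; rfl
      rw [this]
      exact Finset.mem_image_of_mem _ (Finset.mem_univ i)
  rw [hdecomp, Finset.card_union_of_disjoint hdisj, card_P hn he]
  omega



end GoodAux

/-- For `n ≥ 3`, the number of good subsets of `{1,…,n}` is
`2ⁿ - 1 - n·2^⌊n/2⌋ + n/2` for even `n` and `2ⁿ - 1 - n·2^⌊n/2⌋` for odd `n`. -/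
theorem good_subsets_count (n : ℕ) (hn : 3 ≤ n) :
    ({A : Finset (ZMod n) | GoodSet n A}.ncard : ℤ)
      = if Even n then 2 ^ n - 1 - n * 2 ^ (n / 2) + ((n / 2 : ℕ) : ℤ)
        else 2 ^ n - 1 - n * 2 ^ (n / 2) := by
  haveI : NeZero n := ⟨by omega⟩
  classical
  set G : Finset (Finset (ZMod n)) :=
    Finset.univ.filter (fun A => A.Nonempty ∧
      ∀ i ∈ A, ∃ k ∈ Finset.Icc 1 (GoodAux.t n), i + (k : ZMod n) ∈ A) with hG
  have hset : {A : Finset (ZMod n) | GoodSet n A} = ↑G := by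
    ext A
    simp only [Set.mem_setOf_eq, Finset.coe_filter, Finset.mem_univ, true_and, hG,
      Finset.mem_coe, Finset.mem_filter, GoodSet]
    constructor
    · rintro ⟨hne, h⟩
      refine ⟨hne, fun i hi => ?_⟩
      obtain ⟨k, hk1, hk2, hk3⟩ := h i hi
      exact ⟨k, (GoodAux.k_iff (by omega) k).1 ⟨hk1, hk2⟩, hk3⟩
    · rintro ⟨hne, h⟩
      refine ⟨hne, fun i hi => ?_⟩
      obtain ⟨k, hk1, hk3⟩ := h i hi
      obtain ⟨h1, h2⟩ := (GoodAux.k_iff (by omega) k).2 hk1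
      exact ⟨k, h1, h2, hk3⟩
  rw [hset, Set.ncard_coe_finset]
  have hBadsub : GoodAux.Bad n ⊆
      Finset.univ.filter (fun A : Finset (ZMod n) => A.Nonempty) := by
    intro A hA
    exact Finset.mem_filter.2 ⟨Finset.mem_univ _, GoodAux.bad_nonempty hA⟩
  have hGeq : G = (Finset.univ.filter (fun A : Finset (ZMod n) => A.Nonempty))
      \ GoodAux.Bad n := by
    ext A
    simp only [hG, Finset.mem_filter, Finset.mem_univ, true_and, Finset.mem_sdiff,
      GoodAux.Bad, Finset.mem_biUnion, GoodAux.mem_B, not_exists, not_and,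
      and_congr_right_iff]
    intro _
    push_neg
    simp only [not_not]
  have hcards : G.card + (GoodAux.Bad n).card = 2 ^ n - 1 := by
    rw [hGeq, Finset.card_sdiff_add_card_eq_card hBadsub, GoodAux.card_nonempty_sets]
  have h1 : (1 : ℕ) ≤ 2 ^ n := Nat.one_le_two_pow
  have e1 : (G.card : ℤ) + (GoodAux.Bad n).card + 1 = 2 ^ n := by
    have : G.card + (GoodAux.Bad n).card + 1 = 2 ^ n := by omega
    exact_mod_cast this
  by_cases he : Even n
  · rw [if_pos he]
    have e2 : ((GoodAux.Bad n).card : ℤ) + n = n * 2 ^ (n / 2) + ((n / 2 : ℕ) : ℤ) := by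
      exact_mod_cast GoodAux.card_bad_even hn he
    have e3 : (n : ℤ) = ((n / 2 : ℕ) : ℤ) + ((n / 2 : ℕ) : ℤ) := by
      have := Nat.even_iff.1 he
      have h4 : n = n / 2 + n / 2 := by omega
      exact_mod_cast h4
    linarith
  · rw [if_neg he]
    have e2 : ((GoodAux.Bad n).card : ℤ) = n * 2 ^ (n / 2) := by
      exact_mod_cast GoodAux.card_bad_odd hn he
    linarith
end

section
/- Let n≥3, let d be a divisor of n with d≠1, and let σ be the rotation x ↦ x + n/d (mod n) acting on binary n-tuples by permuting coordinates. Then the number of good binary n-tuples fixed by σ equals 2^{n/d} - 1 - n/2 if d=2, and 2^{n/d} - 1 if d≥3. -/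
/-- A binary `n`-tuple (a function `ZMod n → Bool`) is *good* if it is not identically
false and every cyclic gap between consecutive `true` positions is strictly less than
`n/2` (equivalently, every maximal cyclic block of zeros is short enough). -/
def GoodFun (n : ℕ) (a : ZMod n → Bool) : Prop :=
  (∃ i, a i = true) ∧
    ∀ i, a i = true → ∃ k : ℕ, 0 < k ∧ 2 * k < n ∧ a (i + (k : ZMod n)) = true

/-- The number of ones of a binary `n`-tuple. -/
noncomputable def onesCount (n : ℕ) (a : ZMod n → Bool) : ℕ :=
  {i : ZMod n | a i = true}.ncard

section Aux

variable {n m : ℕ}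

/-- Lift a binary `m`-tuple to a periodic binary `n`-tuple. -/
private def phi (hm : m ∣ n) (b : ZMod m → Bool) : ZMod n → Bool :=
  fun i => b (ZMod.castHom hm (ZMod m) i)

private lemma phi_injective [NeZero n] [NeZero m] (hm : m ∣ n) :
    Function.Injective (phi (n := n) hm) := by
  intro b b' h
  funext j
  have h1 := congrFun h ((j.val : ZMod n))
  simpa [phi, map_natCast, ZMod.natCast_rightInverse j] using h1

private lemma phi_natCast [NeZero m] (hm : m ∣ n) (b : ZMod m → Bool) (x : ℕ) :
    phi hm b ((x : ZMod n)) = b ((x : ZMod m)) := by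
  simp [phi, map_natCast]

private lemma phi_periodic [NeZero m] (hm : m ∣ n) (b : ZMod m → Bool) (i : ZMod n) :
    phi hm b (i + ((m : ℕ) : ZMod n)) = phi hm b i := by
  simp [phi, map_add, map_natCast, ZMod.natCast_self]

private lemma periodic_nat (a : ZMod n → Bool)
    (h : ∀ i, a (i + ((m : ℕ) : ZMod n)) = a i) (i : ZMod n) :
    ∀ t : ℕ, a (i + ((t * m : ℕ) : ZMod n)) = a i
  | 0 => by simp
  | t + 1 => by
      have h1 : ((t + 1) * m : ℕ) = (t * m : ℕ) + m := by ring
      rw [h1, Nat.cast_add, ← add_assoc, h, periodic_nat a h i t]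

private lemma periodic_eq_phi [NeZero n] [NeZero m] (hm : m ∣ n) (a : ZMod n → Bool)
    (h : ∀ i, a (i + ((m : ℕ) : ZMod n)) = a i) :
    a = phi hm (fun j => a ((j.val : ZMod n))) := by
  funext i
  show a i = a (((ZMod.castHom hm (ZMod m) i).val : ZMod n))
  have h1 : (ZMod.castHom hm (ZMod m) i) = ((i.val : ℕ) : ZMod m) := by
    conv_lhs => rw [← ZMod.natCast_rightInverse i]
    simp [map_natCast]
  rw [h1, ZMod.val_natCast]
  have h2 := periodic_nat a h (((i.val % m : ℕ) : ZMod n)) (i.val / m)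
  rw [← Nat.cast_add, Nat.mod_add_div', ZMod.natCast_rightInverse i] at h2
  exact h2

end Aux

/-- Fix sizes of good tuples under a nontrivial rotation of order `d`
(the rotation `x ↦ x + n/d`). -/
theorem fix_good_rotation (n d : ℕ) (hn : 3 ≤ n) (hd : d ∣ n) (hd1 : d ≠ 1) :
    ({a : ZMod n → Bool | GoodFun n a ∧
        ∀ i, a (i + ((n / d : ℕ) : ZMod n)) = a i}.ncard : ℤ)
      = if d = 2 then 2 ^ (n / d) - 1 - ((n / 2 : ℕ) : ℤ)
        else 2 ^ (n / d) - 1 := by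
  have hd0 : d ≠ 0 := by rintro rfl; rw [Nat.zero_dvd] at hd; omega
  have hd2le : 2 ≤ d := by omega
  set m := n / d with hmdef
  have hm : m ∣ n := Nat.div_dvd_of_dvd hd
  have hmpos : 0 < m := Nat.div_pos (Nat.le_of_dvd (by omega) hd) (by omega)
  have hnm : n = d * m := (Nat.mul_div_cancel' hd).symm
  haveI : NeZero n := ⟨by omega⟩
  haveI : NeZero m := ⟨by omega⟩
  have hcard : Nat.card (ZMod m → Bool) = 2 ^ m := by
    simp [Nat.card_eq_fintype_card, Fintype.card_fun, ZMod.card]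
  by_cases hd2 : d = 2
  · subst hd2
    rw [if_pos rfl]
    have hn2m : n = 2 * m := hnm
    have hm2 : 2 ≤ m := by omega
    have hS : {a : ZMod n → Bool | GoodFun n a ∧
          ∀ i, a (i + ((m : ℕ) : ZMod n)) = a i}
        = phi hm '' {b : ZMod m → Bool |
            ∃ j j', j ≠ j' ∧ b j = true ∧ b j' = true} := by
      ext a
      simp only [Set.mem_setOf_eq, Set.mem_image]
      constructor
      · rintro ⟨⟨⟨i0, hi0⟩, hgood⟩, hper⟩
        have heq := periodic_eq_phi hm a hper
        set b : ZMod m → Bool := fun j => a ((j.val : ZMod n)) with hb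
        refine ⟨b, ?_, heq.symm⟩
        set j : ZMod m := ZMod.castHom hm (ZMod m) i0 with hj
        have hbj : b j = true := by
          have := hi0
          rw [heq] at this
          exact this
        have hia : a ((j.val : ZMod n)) = true := hbj
        obtain ⟨k, hk0, hkn, hk⟩ := hgood _ hia
        have hklt : k < m := by omega
        rw [heq] at hk
        have hk' : b (j + (k : ZMod m)) = true := by
          have h1 : phi hm b (((j.val : ZMod n)) + (k : ZMod n))
              = b (((j.val : ℕ) : ZMod m) + (k : ZMod m)) := by
            simp [phi, map_add, map_natCast]
          rw [h1, ZMod.natCast_rightInverse j] at hk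
          exact hk
        refine ⟨j, j + (k : ZMod m), ?_, hbj, hk'⟩
        intro hcon
        have : (k : ZMod m) = 0 := by
          have := (left_eq_add).mp hcon
          exact this
        rw [ZMod.natCast_eq_zero_iff] at this
        have := Nat.le_of_dvd hk0 this
        omega
      · rintro ⟨b, ⟨j₁, j₂, hne, hb1, hb2⟩, rfl⟩
        have hper : ∀ i, phi hm b (i + ((m : ℕ) : ZMod n)) = phi hm b i :=
          phi_periodic hm b
        refine ⟨⟨⟨((j₁.val : ZMod n)), ?_⟩, ?_⟩, hper⟩
        · rw [phi_natCast hm b, ZMod.natCast_rightInverse j₁]; exact hb1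
        · intro i hi
          set j : ZMod m := ZMod.castHom hm (ZMod m) i with hj
          have hbj : b j = true := hi
          obtain ⟨j', hne', hbj'⟩ : ∃ j', j ≠ j' ∧ b j' = true := by
            by_cases hjj : j = j₁
            · exact ⟨j₂, by rw [hjj]; exact hne, hb2⟩
            · exact ⟨j₁, hjj, hb1⟩
          set k : ℕ := (j' - j).val with hk
          have hk0 : 0 < k := ZMod.val_pos.mpr (sub_ne_zero.mpr (Ne.symm hne'))
          have hklt : k < m := ZMod.val_lt _
          refine ⟨k, hk0, by omega, ?_⟩
          have h1 : phi hm b (i + (k : ZMod n)) = b (j + (k : ZMod m)) := by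
            simp [phi, map_add, map_natCast, hj]
          rw [h1, hk, ZMod.natCast_rightInverse (j' - j)]
          have : j + (j' - j) = j' := by ring
          rw [this]
          exact hbj'
    rw [hS, Set.ncard_image_of_injective _ (phi_injective hm)]
    set T : Set (ZMod m → Bool) :=
      {b : ZMod m → Bool | ∃ j j', j ≠ j' ∧ b j = true ∧ b j' = true} with hT
    set sing : ZMod m → (ZMod m → Bool) := fun j x => decide (x = j) with hsing
    have hcompl : Tᶜ = insert (fun _ => false) (Set.range sing) := by
      ext b
      simp only [Set.mem_compl_iff, hT, Set.mem_setOf_eq, Set.mem_insert_iff,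
        Set.mem_range]
      constructor
      · intro hb
        have huniq : ∀ j j', b j = true → b j' = true → j = j' := by
          intro j j' h1 h2
          by_contra hne
          exact hb ⟨j, j', hne, h1, h2⟩
        by_cases hz : ∃ j, b j = true
        · obtain ⟨j, hj⟩ := hz
          refine Or.inr ⟨j, ?_⟩
          funext x
          by_cases hx : b x = true
          · have : x = j := huniq x j hx hj
            subst this
            simp [hsing, hx]
          · have hxf : b x = false := by
              cases hbx : b x
              · rfl
              · exact absurd hbx hx
            have hxj : x ≠ j := by
              intro hc; rw [hc] at hxf; rw [hj] at hxf; exact Bool.noConfusion hxf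
            simp [hsing, hxj, hxf]
        · left
          funext x
          cases hbx : b x
          · rfl
          · exact absurd ⟨x, hbx⟩ hz
      · rintro (rfl | ⟨j, rfl⟩)
        · rintro ⟨j₁, j₂, hne, h1, h2⟩
          exact Bool.noConfusion h1
        · rintro ⟨j₁, j₂, hne, h1, h2⟩
          simp only [hsing, decide_eq_true_eq] at h1 h2
          exact hne (h1.trans h2.symm)
    have hsinj : Function.Injective sing := by
      intro j j' h
      have := congrFun h j
      simpa [hsing] using this
    have hrange : (Set.range sing).ncard = m := by
      rw [← Set.image_univ, Set.ncard_image_of_injective _ hsinj, Set.ncard_univ]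
      simp [Nat.card_eq_fintype_card, ZMod.card]
    have hnotmem : (fun _ => false) ∉ Set.range sing := by
      rintro ⟨j, hj⟩
      have := congrFun hj j
      simp [hsing] at this
    have hsum := Set.ncard_add_ncard_compl T
    rw [hcompl, Set.ncard_insert_of_notMem hnotmem, hrange, hcard] at hsum
    have hlt : m < 2 ^ m := Nat.lt_two_pow_self
    have hTcard : T.ncard = 2 ^ m - (m + 1) := by omega
    have hm2' : n / 2 = m := hmdef.symm
    rw [hTcard, hm2', Nat.cast_sub (by omega)]
    push_cast
    ring
  · rw [if_neg hd2]
    have hd3 : 3 ≤ d := by omega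
    have h2m : 2 * m < n := by
      calc 2 * m < 3 * m := by omega
        _ ≤ d * m := Nat.mul_le_mul_right m hd3
        _ = n := hnm.symm
    have hS : {a : ZMod n → Bool | GoodFun n a ∧
          ∀ i, a (i + ((m : ℕ) : ZMod n)) = a i}
        = phi hm '' {b : ZMod m → Bool | ∃ j, b j = true} := by
      ext a
      simp only [Set.mem_setOf_eq, Set.mem_image]
      constructor
      · rintro ⟨⟨⟨i0, hi0⟩, -⟩, hper⟩
        have heq := periodic_eq_phi hm a hper
        refine ⟨fun j => a ((j.val : ZMod n)), ?_, heq.symm⟩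
        rw [heq] at hi0
        exact ⟨_, hi0⟩
      · rintro ⟨b, ⟨j, hj⟩, rfl⟩
        have hper : ∀ i, phi hm b (i + ((m : ℕ) : ZMod n)) = phi hm b i :=
          phi_periodic hm b
        refine ⟨⟨⟨((j.val : ZMod n)), ?_⟩, ?_⟩, hper⟩
        · rw [phi_natCast hm b, ZMod.natCast_rightInverse j]; exact hj
        · intro i hi
          exact ⟨m, hmpos, h2m, by rw [hper i]; exact hi⟩
    rw [hS, Set.ncard_image_of_injective _ (phi_injective hm)]
    have hcompl : {b : ZMod m → Bool | ∃ j, b j = true}ᶜ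
        = {fun _ => false} := by
      ext b
      simp only [Set.mem_compl_iff, Set.mem_setOf_eq, Set.mem_singleton_iff,
        not_exists]
      constructor
      · intro hb
        funext x
        cases hbx : b x
        · rfl
        · exact absurd hbx (hb x)
      · rintro rfl x h
        exact Bool.noConfusion h
    have hsum := Set.ncard_add_ncard_compl
      {b : ZMod m → Bool | ∃ j, b j = true}
    rw [hcompl, Set.ncard_singleton, hcard] at hsum
    have h1 : 1 ≤ 2 ^ m := Nat.one_le_pow _ _ (by norm_num)
    have hval : {b : ZMod m → Bool | ∃ j, b j = true}.ncard = 2 ^ m - 1 :=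
      Nat.eq_sub_of_add_eq hsum
    rw [hval, Nat.cast_sub h1]
    push_cast
    ring
end

section
/- Let n≥3, let d≠1 divide n, let 3≤m≤n, and let σ be the rotation x ↦ x + n/d (mod n). Then the number of good binary n-tuples with exactly m ones fixed by σ equals binom(n/d, m/d), interpreted as 0 if d does not divide m. -/
section Aux

/-- Repeat a `k`-periodic pattern. -/
def phiFun {n k : ℕ} (h : k ∣ n) (b : ZMod k → Bool) : ZMod n → Bool :=
  fun i => b (ZMod.castHom h (ZMod k) i)

lemma phiFun_periodic {n k : ℕ} (h : k ∣ n) (b : ZMod k → Bool) (i : ZMod n) :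
    phiFun h b (i + (k : ZMod n)) = phiFun h b i := by
  unfold phiFun
  rw [map_add, map_natCast, ZMod.natCast_self, add_zero]

lemma onesCount_eq_filter_card (n : ℕ) (a : ZMod n → Bool) [NeZero n] :
    onesCount n a = (Finset.univ.filter fun i => a i = true).card := by
  rw [onesCount, Set.ncard_eq_toFinset_card', Set.toFinset_setOf]

lemma exists_phiFun {n k : ℕ} (hkn : k ∣ n) [NeZero n] [NeZero k]
    (a : ZMod n → Bool) (ha : ∀ i, a (i + (k : ZMod n)) = a i) :
    ∃ b, a = phiFun hkn b := by
  have key : ∀ (c x : ℕ), a ((x + c * k : ℕ) : ZMod n) = a ((x : ℕ) : ZMod n) := by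
    intro c
    induction c with
    | zero => simp
    | succ c ih =>
      intro x
      have : ((x + (c + 1) * k : ℕ) : ZMod n) = ((x + c * k : ℕ) : ZMod n) + (k : ZMod n) := by
        push_cast; ring
      rw [this, ha, ih]
  refine ⟨fun j => a ((j.val : ℕ) : ZMod n), ?_⟩
  funext i
  have hval : (ZMod.castHom hkn (ZMod k) i).val = i.val % k := by
    rw [ZMod.castHom_apply, ← ZMod.natCast_val, ZMod.val_natCast]
  show a i = a (((ZMod.castHom hkn (ZMod k) i).val : ℕ) : ZMod n)
  rw [hval]
  have : a i = a ((i.val : ℕ) : ZMod n) := by rw [ZMod.natCast_val, ZMod.cast_id]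
  rw [this]
  conv_lhs => rw [← Nat.mod_add_div' i.val k]
  exact key _ _

lemma phiFun_injective {n k : ℕ} (hkn : k ∣ n) [NeZero n] [NeZero k] :
    Function.Injective (phiFun (n := n) hkn) := by
  intro b₁ b₂ hb
  funext j
  have := congrFun hb ((j.val : ℕ) : ZMod n)
  simpa [phiFun, map_natCast, ZMod.natCast_val, ZMod.cast_id] using this

lemma fiber_card {n k d : ℕ} (hn : n = d * k) (hk : 0 < k) (hkn : k ∣ n)
    [NeZero n] [NeZero k] (j : ZMod k) :
    (Finset.univ.filter fun i : ZMod n => ZMod.castHom hkn (ZMod k) i = j).card = d := by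
  have hlt : ∀ c : ℕ, c < d → j.val + c * k < n := by
    intro c hc
    calc j.val + c * k < k + c * k := by
          exact Nat.add_lt_add_right (ZMod.val_lt j) _
      _ = (c + 1) * k := by ring
      _ ≤ d * k := Nat.mul_le_mul_right k hc
      _ = n := hn.symm
  apply Finset.card_eq_of_bijective (fun c hc => ((j.val + c * k : ℕ) : ZMod n))
  · intro i hi
    simp only [Finset.mem_filter, Finset.mem_univ, true_and] at hi
    have hval : i.val % k = j.val := by
      have : (ZMod.castHom hkn (ZMod k) i).val = i.val % k := by
        rw [ZMod.castHom_apply, ← ZMod.natCast_val, ZMod.val_natCast]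
      rw [← this, hi]
    refine ⟨i.val / k, ?_, ?_⟩
    · have : i.val < d * k := hn ▸ ZMod.val_lt i
      exact Nat.div_lt_of_lt_mul (by rwa [mul_comm] at this)
    · rw [← hval, Nat.mod_add_div', ZMod.natCast_val, ZMod.cast_id]
  · intro c hc
    simp only [Finset.mem_filter, Finset.mem_univ, true_and]
    rw [map_natCast]
    push_cast
    simp [ZMod.natCast_val, ZMod.cast_id, ZMod.natCast_self]
  · intro c₁ c₂ h₁ h₂ heq
    have : j.val + c₁ * k = j.val + c₂ * k := by
      have h₁' := ZMod.val_cast_of_lt (hlt c₁ h₁)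
      have h₂' := ZMod.val_cast_of_lt (hlt c₂ h₂)
      rw [← h₁', ← h₂', heq]
    exact Nat.eq_of_mul_eq_mul_right hk (Nat.add_left_cancel this)

lemma onesCount_phiFun {n k d : ℕ} (hn : n = d * k) (hk : 0 < k) (hkn : k ∣ n)
    [NeZero n] [NeZero k] (b : ZMod k → Bool) :
    onesCount n (phiFun hkn b) = d * onesCount k b := by
  rw [onesCount_eq_filter_card, onesCount_eq_filter_card]
  rw [Finset.card_eq_sum_card_fiberwise
    (f := fun i : ZMod n => ZMod.castHom hkn (ZMod k) i)
    (t := Finset.univ.filter fun j => b j = true)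
    (fun i hi => by
      simp only [Finset.mem_coe, Finset.mem_filter, Finset.mem_univ, true_and] at hi ⊢
      exact hi)]
  have hfib : ∀ j ∈ Finset.univ.filter (fun j => b j = true),
      ((Finset.univ.filter fun i : ZMod n => phiFun hkn b i = true).filter
        fun i => ZMod.castHom hkn (ZMod k) i = j).card = d := by
    intro j hj
    simp only [Finset.mem_filter, Finset.mem_univ, true_and] at hj
    rw [← fiber_card hn hk hkn j]
    congr 1
    ext i
    simp only [Finset.mem_filter, Finset.mem_univ, true_and]
    constructor
    · rintro ⟨-, h⟩; exact h
    · intro h; exact ⟨by show b _ = true; rw [h, hj], h⟩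
  rw [Finset.sum_congr rfl hfib, Finset.sum_const, smul_eq_mul, mul_comm]

lemma good_of_phiFun {n k d : ℕ} (hn : n = d * k) (hk : 0 < k) (hd : 2 ≤ d)
    (hkn : k ∣ n) [NeZero n] [NeZero k] (b : ZMod k → Bool) (m : ℕ) (hm : 3 ≤ m)
    (hcount : onesCount n (phiFun hkn b) = m) :
    GoodFun n (phiFun hkn b) := by
  have hcnt := onesCount_phiFun hn hk hkn b
  rw [hcount] at hcnt
  constructor
  · have hne : {i : ZMod n | phiFun hkn b i = true}.ncard ≠ 0 := by
      unfold onesCount at hcount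
      omega
    obtain ⟨i, hi⟩ := Set.nonempty_of_ncard_ne_zero hne
    exact ⟨i, hi⟩
  · intro i hi
    rcases Nat.lt_or_ge (onesCount k b) 2 with hr | hr
    · -- onesCount b = 1, so m = d ≥ 3; use shift k
      have hd3 : 3 ≤ d := by
        interval_cases h : onesCount k b <;> omega
      refine ⟨k, hk, ?_, ?_⟩
      · calc 2 * k < d * k := (Nat.mul_lt_mul_right hk).mpr (by omega)
          _ = n := hn.symm
      · rw [phiFun_periodic]; exact hi
    · -- at least two ones in b
      have hfin : {j : ZMod k | b j = true}.Finite := Set.toFinite _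
      have h2 : 1 < {j : ZMod k | b j = true}.ncard := hr
      obtain ⟨j₁, j₂, hj₁, hj₂, hne⟩ := (Set.one_lt_ncard_iff hfin).mp h2
      set c : ZMod k := ZMod.castHom hkn (ZMod k) i with hc
      obtain ⟨j, hj, hjc⟩ : ∃ j, b j = true ∧ j ≠ c := by
        by_cases h1 : j₁ = c
        · exact ⟨j₂, hj₂, by rw [← h1]; exact hne.symm⟩
        · exact ⟨j₁, hj₁, h1⟩
      refine ⟨(j - c).val, ?_, ?_, ?_⟩
      · have h0 : j - c ≠ 0 := sub_ne_zero.mpr hjc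
        exact Nat.pos_of_ne_zero (fun h => h0 ((ZMod.val_eq_zero _).mp h))
      · have h1 : (j - c).val < k := ZMod.val_lt _
        have : 2 * k ≤ d * k := Nat.mul_le_mul_right k hd
        omega
      · show b (ZMod.castHom hkn (ZMod k) (i + ((j - c).val : ZMod n))) = true
        rw [map_add, map_natCast, ZMod.natCast_val, ZMod.cast_id, ← hc]
        rw [add_sub_cancel]
        exact hj

lemma count_ones_eq_choose (k r : ℕ) [NeZero k] :
    {b : ZMod k → Bool | onesCount k b = r}.ncard = k.choose r := by
  classical
  rw [Set.ncard_eq_toFinset_card', Set.toFinset_setOf]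
  have hcard : k.choose r = (Finset.powersetCard r (Finset.univ : Finset (ZMod k))).card := by
    rw [Finset.card_powersetCard, Finset.card_univ, ZMod.card]
  rw [hcard]
  apply Finset.card_nbij' (i := fun b => Finset.univ.filter fun j => b j = true)
    (j := fun s => fun x => decide (x ∈ s))
  · intro b hb
    simp only [Finset.mem_coe, Finset.mem_filter, Finset.mem_univ, true_and] at hb
    rw [Finset.mem_coe, Finset.mem_powersetCard]
    exact ⟨Finset.subset_univ _, by rw [← hb, onesCount_eq_filter_card]⟩
  · intro s hs
    rw [Finset.mem_coe, Finset.mem_powersetCard] at hs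
    simp only [Finset.mem_coe, Finset.mem_filter, Finset.mem_univ, true_and]
    rw [onesCount_eq_filter_card, ← hs.2]
    congr 1
    ext x
    simp
  · intro b hb
    funext x
    simp
  · intro s hs
    ext x
    simp

end Aux

/-- Fix sizes of good tuples with exactly `m` ones under a nontrivial rotation of
order `d`: the count is `C(n/d, m/d)`, interpreted as `0` when `d ∤ m`. -/
theorem fix_good_m_rotation (n d m : ℕ) (hn : 3 ≤ n) (hd : d ∣ n) (hd1 : d ≠ 1)
    (hm : 3 ≤ m) (hmn : m ≤ n) :
    {a : ZMod n → Bool | GoodFun n a ∧ onesCount n a = m ∧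
        ∀ i, a (i + ((n / d : ℕ) : ZMod n)) = a i}.ncard
      = if d ∣ m then (n / d).choose (m / d) else 0 := by
  classical
  set k := n / d with hkdef
  have hn0 : 0 < n := by omega
  have hd0 : 0 < d := by
    rcases Nat.eq_zero_or_pos d with h | h
    · subst h; simp at hd; omega
    · exact h
  have hd2 : 2 ≤ d := by omega
  have hnk : n = d * k := by
    rw [hkdef, Nat.mul_div_cancel' hd]
  have hk0 : 0 < k := by
    rcases Nat.eq_zero_or_pos k with h | h
    · rw [h, mul_zero] at hnk; omega
    · exact h
  have hkn : k ∣ n := ⟨d, by rw [hnk, mul_comm]⟩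
  haveI : NeZero n := ⟨by omega⟩
  haveI : NeZero k := ⟨by omega⟩
  have hset : {a : ZMod n → Bool | GoodFun n a ∧ onesCount n a = m ∧
        ∀ i, a (i + ((k : ℕ) : ZMod n)) = a i}
      = phiFun hkn '' {b | d * onesCount k b = m} := by
    ext a
    simp only [Set.mem_setOf_eq, Set.mem_image]
    constructor
    · rintro ⟨hgood, hcount, hper⟩
      obtain ⟨b, rfl⟩ := exists_phiFun hkn a hper
      refine ⟨b, ?_, rfl⟩
      rw [← hcount, onesCount_phiFun hnk hk0 hkn]
    · rintro ⟨b, hb, rfl⟩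
      have hcount : onesCount n (phiFun hkn b) = m := by
        rw [onesCount_phiFun hnk hk0 hkn, hb]
      exact ⟨good_of_phiFun hnk hk0 hd2 hkn b m hm hcount, hcount,
        fun i => phiFun_periodic hkn b i⟩
  rw [hset, Set.ncard_image_of_injective _ (phiFun_injective hkn)]
  by_cases hdm : d ∣ m
  · rw [if_pos hdm]
    have : {b : ZMod k → Bool | d * onesCount k b = m}
        = {b : ZMod k → Bool | onesCount k b = m / d} := by
      ext b
      simp only [Set.mem_setOf_eq]
      constructor
      · intro h
        rw [← h, Nat.mul_div_cancel_left _ hd0]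
      · intro h
        obtain ⟨c, rfl⟩ := hdm
        rw [h, Nat.mul_div_cancel_left c hd0]
    rw [this, count_ones_eq_choose]
  · rw [if_neg hdm]
    have : {b : ZMod k → Bool | d * onesCount k b = m} = ∅ := by
      ext b
      simp only [Set.mem_setOf_eq, Set.mem_empty_iff_false, iff_false]
      intro h
      exact hdm ⟨onesCount k b, h.symm⟩
    rw [this, Set.ncard_empty]
end

section
/- Let n≥3 be odd and let σ be the reflection x ↦ n - x (mod n) of {1,...,n}. The number of good binary n-tuples fixed by σ equals 2^{(n+1)/2} - 3·2^{(n-1)/4} + 1 if n≡1 (mod 4), and 2^{(n+1)/2} - 2^{(n+5)/4} + 1 if n≡3 (mod 4). -/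
section Aux
variable {n m : ℕ}


private lemma r_lt (hn : n = 2*m+1) (x : ZMod n) : min x.val (n - x.val) < m + 1 := by
  haveI : NeZero n := ⟨by omega⟩
  have h := ZMod.val_lt x
  omega

private lemma not_in_window (hn : n = 2*m+1) {a : ZMod n → Bool}
    {i y : ZMod n} (hy : a y = true)
    (hwin : ∀ k : ℕ, 1 ≤ k → k ≤ m → a (i + (k : ZMod n)) = false) :
    (y - i).val = 0 ∨ m + 1 ≤ (y - i).val := by
  haveI : NeZero n := ⟨by omega⟩
  by_contra h
  push_neg at h
  obtain ⟨h1, h2⟩ := h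
  have e : (((y - i).val : ℕ) : ZMod n) = y - i := ZMod.natCast_rightInverse _
  have : y = i + (((y - i).val : ℕ) : ZMod n) := by rw [e]; ring
  rw [this, hwin _ (by omega) (by omega)] at hy
  exact absurd hy (by simp)

private lemma P_iff (hn : n = 2*m+1) (x : ZMod n) :
    (2 * min x.val (n - x.val) ≤ m) ↔
      ((x + x).val % 2 = 0 ∧ (x + x).val ≤ m) ∨ ((x + x).val % 2 = 1 ∧ m < (x + x).val) := by
  haveI : NeZero n := ⟨by omega⟩
  have hv := ZMod.val_lt x
  have ha : (x + x).val = (x.val + x.val) % n := ZMod.val_add x x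
  rcases lt_or_ge (x.val + x.val) n with h | h
  · rw [Nat.mod_eq_of_lt h] at ha; omega
  · rw [Nat.mod_eq_sub_mod h, Nat.mod_eq_of_lt (by omega)] at ha; omega

private lemma self_add_self_eq_zero (hn : n = 2*m+1) {x : ZMod n} (h : x + x = 0) : x = 0 := by
  haveI : NeZero n := ⟨by omega⟩
  by_contra hx
  have h1 : -x = x := neg_eq_of_add_eq_zero_left h
  have h2 := ZMod.neg_val x
  rw [if_neg hx, h1] at h2
  have h3 := ZMod.val_lt x
  have hx0 : x.val ≠ 0 := fun hh => hx ((ZMod.val_eq_zero x).1 hh)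
  omega

private lemma window_classify (hn : n = 2*m+1) {a : ZMod n → Bool}
    (hsym : ∀ x, a (-x) = a x) {i : ZMod n} (hi : a i = true)
    (hwin : ∀ k : ℕ, 1 ≤ k → k ≤ m → a (i + (k : ZMod n)) = false)
    {y : ZMod n} (hy : a y = true) :
    (2 * min y.val (n - y.val) ≤ m ↔ 2 * min i.val (n - i.val) ≤ m) := by
  haveI : NeZero n := ⟨by omega⟩
  have W : ∀ z : ZMod n, a z = true → (z - i).val = 0 ∨ m + 1 ≤ (z - i).val :=
    fun z hz => not_in_window hn hz hwin
  by_cases hii : i + i = 0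
  · have hi0 : i = 0 := self_add_self_eq_zero hn hii
    subst hi0
    have hy0 : y = 0 := by
      by_contra hy0
      have h1 := W y hy
      have h2 := W (-y) (by rw [hsym]; exact hy)
      rw [sub_zero] at h1 h2
      have hyv : y.val ≠ 0 := fun h => hy0 ((ZMod.val_eq_zero _).1 h)
      have hny : (-y).val = n - y.val := by rw [ZMod.neg_val, if_neg hy0]
      have hlt := ZMod.val_lt y
      omega
    subst hy0; exact Iff.rfl
  · have hs_pos : (i+i).val ≠ 0 := fun h => hii ((ZMod.val_eq_zero _).1 h)
    have hs_lt : (i+i).val < n := ZMod.val_lt _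
    have hnegv : (-(i+i)).val = n - (i+i).val := by rw [ZMod.neg_val, if_neg hii]
    have hsm : (i+i).val ≤ m := by
      have h2 := W (-i) (by rw [hsym]; exact hi)
      have he : -i - i = -(i + i) := by ring
      rw [he, hnegv] at h2
      omega
    rw [P_iff hn, P_iff hn]
    by_cases hyi : y = i
    · subst hyi; omega
    by_cases hyni : y = -i
    · subst hyni
      have he : -i + -i = -(i+i) := by ring
      rw [he, hnegv]
      omega
    · have h1 := W y hy
      have h2 := W (-y) (by rw [hsym]; exact hy)
      have hy_sub : y - i ≠ 0 := sub_ne_zero.2 hyi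
      have hy_sub2 : -y - i ≠ 0 := by
        intro h
        apply hyni
        have : -y = i := by linear_combination h
        rw [← this]; ring
      have hv1 : (y - i).val ≠ 0 := fun h => hy_sub ((ZMod.val_eq_zero _).1 h)
      have hv2 : (-y - i).val ≠ 0 := fun h => hy_sub2 ((ZMod.val_eq_zero _).1 h)
      have hl1 : (y - i).val < n := ZMod.val_lt _
      have hl2 : (-y - i).val < n := ZMod.val_lt _
      have d1v : (i - y).val = n - (y - i).val := by
        have he : i - y = -(y - i) := by ring
        rw [he, ZMod.neg_val, if_neg hy_sub]
      have d2v : (i + y).val = n - (-y - i).val := by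
        have he : i + y = -(-y - i) := by ring
        rw [he, ZMod.neg_val, if_neg hy_sub2]
      have hd1 : 1 ≤ (i - y).val ∧ (i - y).val ≤ m := by omega
      have hd2 : 1 ≤ (i + y).val ∧ (i + y).val ≤ m := by omega
      have hsum : (i - y).val + (i + y).val = (i + i).val := by
        have he : (i - y) + (i + y) = i + i := by ring
        have hv := ZMod.val_add (i - y) (i + y)
        rw [he, Nat.mod_eq_of_lt (by omega)] at hv
        omega
      have c1 : (((i - y).val : ℕ) : ZMod n) = i - y := ZMod.natCast_rightInverse _
      have c2 : (((i + y).val : ℕ) : ZMod n) = i + y := ZMod.natCast_rightInverse _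
      rcases le_or_gt (i - y).val (i + y).val with hc | hc
      · have ht : (y + y).val = (i + y).val - (i - y).val := by
          have he : y + y = (i + y) - (i - y) := by ring
          have hcast : (((i + y).val - (i - y).val : ℕ) : ZMod n) = (i + y) - (i - y) := by
            rw [Nat.cast_sub hc, c1, c2]
          rw [he, ← hcast, ZMod.val_cast_of_lt (by omega)]
        omega
      · have hne : (((i - y).val - (i + y).val : ℕ) : ZMod n) ≠ 0 := by
          rw [Ne, ← ZMod.val_eq_zero, ZMod.val_cast_of_lt (by omega)]
          omega
        have ht : (y + y).val = n - ((i - y).val - (i + y).val) := by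
          have he : y + y = -(((i - y).val - (i + y).val : ℕ) : ZMod n) := by
            rw [Nat.cast_sub (le_of_lt hc), c1, c2]; ring
          rw [he, ZMod.neg_val, if_neg hne, ZMod.val_cast_of_lt (by omega)]
        omega


private lemma rep_true (hn : n = 2*m+1) {a : ZMod n → Bool} (hsym : ∀ x, a (-x) = a x)
    (y : ZMod n) : a ((min y.val (n - y.val) : ℕ) : ZMod n) = a y := by
  haveI : NeZero n := ⟨by omega⟩
  have hv := ZMod.val_lt y
  rcases le_or_gt y.val (n - y.val) with h | h
  · rw [min_eq_left h, ZMod.natCast_rightInverse y]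
  · have hy0 : y ≠ 0 := by
      intro h0
      rw [h0, ZMod.val_zero] at h
      omega
    have he : (min y.val (n - y.val) : ℕ) = (-y).val := by
      rw [ZMod.neg_val, if_neg hy0]; omega
    rw [he, ZMod.natCast_rightInverse (-y), hsym]

private lemma r_cast (hn : n = 2*m+1) {j : ℕ} (hj : j ≤ m) :
    min ((j : ZMod n)).val (n - ((j : ZMod n)).val) = j := by
  haveI : NeZero n := ⟨by omega⟩
  rw [ZMod.val_cast_of_lt (by omega)]
  omega

private lemma r_neg (hn : n = 2*m+1) (x : ZMod n) :
    min (-x).val (n - (-x).val) = min x.val (n - x.val) := by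
  haveI : NeZero n := ⟨by omega⟩
  have hv := ZMod.val_lt x
  rcases eq_or_ne x 0 with h | h
  · rw [h, neg_zero]
  · rw [ZMod.neg_val, if_neg h]
    omega


private lemma good_iff (hn : n = 2*m+1) (hm : 1 ≤ m) {a : ZMod n → Bool}
    (hsym : ∀ x, a (-x) = a x) :
    GoodFun n a ↔ ((∃ j, a j = true ∧ 2 * min j.val (n - j.val) ≤ m) ∧
      (∃ j, a j = true ∧ m < 2 * min j.val (n - j.val))) := by
  haveI : NeZero n := ⟨by omega⟩
  constructor
  · rintro ⟨⟨x0, hx0⟩, hstep⟩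
    by_contra hcon
    rw [not_and_or] at hcon
    have hFin : (Finset.univ.filter (fun y : ZMod n => a y = true)).Nonempty :=
      ⟨x0, by simp [hx0]⟩
    have hRne : ((Finset.univ.filter (fun y : ZMod n => a y = true)).image
        (fun y => min y.val (n - y.val))).Nonempty := hFin.image _
    set R := (Finset.univ.filter (fun y : ZMod n => a y = true)).image
        (fun y => min y.val (n - y.val)) with hR
    rcases hcon with hcon | hcon
    · -- no low true: all trues high; use min
      push_neg at hcon
      set ρ := R.min' hRne with hρ
      obtain ⟨y0, hy0F, hy0r⟩ := Finset.mem_image.1 (R.min'_mem hRne)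
      have hy0 : a y0 = true := (Finset.mem_filter.1 hy0F).2
      have hρ_le : ∀ y, a y = true → ρ ≤ min y.val (n - y.val) := by
        intro y hy
        exact R.min'_le _ (Finset.mem_image.2 ⟨y, by simp [hy], rfl⟩)
      have hρm : m + 1 ≤ 2 * ρ := by have := hcon y0 hy0; omega
      have hρle : ρ ≤ m := by
        have := ZMod.val_lt y0; omega
      have hρpos : 1 ≤ ρ := by omega
      have hiρ : a (-((ρ : ℕ) : ZMod n)) = true := by
        rw [hsym, hρ, ← hy0r, rep_true hn hsym y0]; exact hy0
      obtain ⟨k, hk1, hk2, hk3⟩ := hstep _ hiρ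
      have hkm : k ≤ m := by omega
      have hcne : ((ρ : ℕ) : ZMod n) ≠ 0 := by
        rw [Ne, ← ZMod.val_eq_zero, ZMod.val_cast_of_lt (by omega)]
        omega
      have hvneg : (-((ρ : ℕ) : ZMod n)).val = n - ρ := by
        rw [ZMod.neg_val, if_neg hcne, ZMod.val_cast_of_lt (by omega)]
      have hval : ((-((ρ : ℕ) : ZMod n)) + (k : ZMod n)).val
          = if k < ρ then n - ρ + k else k - ρ := by
        rw [ZMod.val_add, hvneg, ZMod.val_cast_of_lt (show k < n by omega)]
        split_ifs with h
        · rw [Nat.mod_eq_of_lt (by omega)]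
        · rw [Nat.mod_eq_sub_mod (by omega), Nat.mod_eq_of_lt (by omega)]
          omega
      have hfin := hρ_le _ hk3
      rw [hval] at hfin
      split_ifs at hfin <;> omega
    · -- no high true: all trues low; use max
      push_neg at hcon
      set ρ := R.max' hRne with hρ
      obtain ⟨y0, hy0F, hy0r⟩ := Finset.mem_image.1 (R.max'_mem hRne)
      have hy0 : a y0 = true := (Finset.mem_filter.1 hy0F).2
      have hρ_ge : ∀ y, a y = true → min y.val (n - y.val) ≤ ρ := by
        intro y hy
        exact R.le_max' _ (Finset.mem_image.2 ⟨y, by simp [hy], rfl⟩)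
      have hρm : 2 * ρ ≤ m := by have := hcon y0 hy0; omega
      have hiρ : a ((ρ : ℕ) : ZMod n) = true := by
        rw [hρ, ← hy0r, rep_true hn hsym y0]; exact hy0
      obtain ⟨k, hk1, hk2, hk3⟩ := hstep _ hiρ
      have hkm : k ≤ m := by omega
      have hval : (((ρ : ℕ) : ZMod n) + (k : ZMod n)).val = ρ + k := by
        rw [ZMod.val_add, ZMod.val_cast_of_lt (show ρ < n by omega),
          ZMod.val_cast_of_lt (show k < n by omega), Nat.mod_eq_of_lt (by omega)]
      have hfin := hρ_ge _ hk3
      rw [hval] at hfin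
      omega
  · rintro ⟨⟨j1, hj1, hP1⟩, ⟨j2, hj2, hP2⟩⟩
    refine ⟨⟨j1, hj1⟩, ?_⟩
    intro i hi
    by_contra hcon
    push_neg at hcon
    have hwin : ∀ k : ℕ, 1 ≤ k → k ≤ m → a (i + (k : ZMod n)) = false := by
      intro k h1 h2
      have := hcon k (by omega) (by omega)
      simpa using this
    have c1 := window_classify hn hsym hi hwin hj1
    have c2 := window_classify hn hsym hi hwin hj2
    omega

end Aux


private lemma card_exists_true (γ : Type) [Fintype γ] [DecidableEq γ] :
    Nat.card {u : γ → Bool // ∃ j, u j = true} = 2 ^ Nat.card γ - 1 := by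
  classical
  rw [Nat.card_eq_fintype_card, Nat.card_eq_fintype_card]
  have h : ∀ u : γ → Bool, (∃ j, u j = true) ↔ ¬ (u = fun _ => false) := by
    intro u
    simp [funext_iff]
  rw [Fintype.card_congr (Equiv.subtypeEquivRight h),
    Fintype.card_subtype_compl, Fintype.card_subtype_eq, Fintype.card_fun,
    Fintype.card_bool]

private lemma card_low (m : ℕ) :
    Nat.card {j : Fin (m+1) // 2 * (j : ℕ) ≤ m} = m / 2 + 1 := by
  have e : {j : Fin (m+1) // 2 * (j : ℕ) ≤ m} ≃ Fin (m/2 + 1) :=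
    { toFun := fun j => ⟨(j.1 : ℕ), by have := j.2; omega⟩
      invFun := fun k => ⟨⟨k.1, by have := k.2; omega⟩, by have := k.2; simp; omega⟩
      left_inv := fun j => rfl
      right_inv := fun k => rfl }
  rw [Nat.card_congr e, Nat.card_eq_fintype_card, Fintype.card_fin]

private lemma card_high (m : ℕ) :
    Nat.card {j : Fin (m+1) // ¬ (2 * (j : ℕ) ≤ m)} = m - m / 2 := by
  have e : {j : Fin (m+1) // ¬ (2 * (j : ℕ) ≤ m)} ≃ Fin (m - m/2) :=
    { toFun := fun j => ⟨(j.1 : ℕ) - (m/2 + 1), by have h1 := j.2; have h2 := j.1.isLt; omega⟩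
      invFun := fun k => ⟨⟨k.1 + m/2 + 1, by have := k.2; omega⟩, by have := k.2; simp; omega⟩
      left_inv := fun j => by
        have h1 := j.2
        apply Subtype.ext
        apply Fin.ext
        show (j.1 : ℕ) - (m/2 + 1) + m/2 + 1 = (j.1 : ℕ)
        omega
      right_inv := fun k => by
        have h1 := k.2
        apply Fin.ext
        show (k : ℕ) + m/2 + 1 - (m/2 + 1) = (k : ℕ)
        omega }
  rw [Nat.card_congr e, Nat.card_eq_fintype_card, Fintype.card_fin]

/-- For odd `n ≥ 3`, the number of good binary `n`-tuples fixed by the reflection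
`x ↦ n - x = -x (mod n)`. -/
theorem fix_good_reflection_odd (n : ℕ) (hn : 3 ≤ n) (hodd : Odd n) :
    ({a : ZMod n → Bool | GoodFun n a ∧ ∀ i, a (-i) = a i}.ncard : ℤ)
      = if n % 4 = 1 then 2 ^ ((n + 1) / 2) - 3 * 2 ^ ((n - 1) / 4) + 1
        else 2 ^ ((n + 1) / 2) - 2 ^ ((n + 5) / 4) + 1 := by
  classical
  obtain ⟨m, hm⟩ : ∃ m, n = 2 * m + 1 := by
    obtain ⟨t, ht⟩ := hodd; exact ⟨t, by omega⟩
  have hm1 : 1 ≤ m := by omega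
  haveI : NeZero n := ⟨by omega⟩
  -- Step 1: equiv with restricted functions on Fin (m+1)
  have e1 : {a : ZMod n → Bool | GoodFun n a ∧ ∀ i, a (-i) = a i} ≃
      {b : Fin (m+1) → Bool //
        (∃ j : Fin (m+1), b j = true ∧ 2 * (j : ℕ) ≤ m) ∧
        (∃ j : Fin (m+1), b j = true ∧ m < 2 * (j : ℕ))} :=
    { toFun := fun a => ⟨fun j => a.1 (((j : ℕ) : ZMod n)), by
        obtain ⟨hgood, hsym⟩ := a.2
        obtain ⟨⟨j1, hj1, hP1⟩, ⟨j2, hj2, hP2⟩⟩ := (good_iff hm hm1 hsym).1 hgood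
        exact ⟨⟨⟨_, r_lt hm j1⟩, (rep_true hm hsym j1).trans hj1, hP1⟩,
               ⟨⟨_, r_lt hm j2⟩, (rep_true hm hsym j2).trans hj2, hP2⟩⟩⟩
      invFun := fun b => ⟨fun x => b.1 ⟨min x.val (n - x.val), r_lt hm x⟩, by
        have hsym : ∀ x : ZMod n,
            b.1 ⟨min (-x).val (n - (-x).val), r_lt hm (-x)⟩
              = b.1 ⟨min x.val (n - x.val), r_lt hm x⟩ := by
          intro x
          have hidx : (⟨min (-x).val (n - (-x).val), r_lt hm (-x)⟩ : Fin (m+1))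
              = ⟨min x.val (n - x.val), r_lt hm x⟩ := Fin.ext (r_neg hm x)
          rw [hidx]
        have key : ∀ j : Fin (m+1),
            (⟨min (((j:ℕ):ZMod n)).val (n - (((j:ℕ):ZMod n)).val),
              r_lt hm (((j:ℕ):ZMod n))⟩ : Fin (m+1)) = j := by
          intro j
          apply Fin.ext
          show min (((j:ℕ):ZMod n)).val (n - (((j:ℕ):ZMod n)).val) = (j:ℕ)
          exact r_cast hm (by have := j.isLt; omega)
        refine ⟨?_, hsym⟩
        rw [good_iff hm hm1 hsym]
        obtain ⟨⟨j1, hj1, hP1⟩, ⟨j2, hj2, hP2⟩⟩ := b.2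
        constructor
        · refine ⟨((j1 : ℕ) : ZMod n), ?_, ?_⟩
          · rw [key j1]; exact hj1
          · rw [r_cast hm (show (j1:ℕ) ≤ m by have := j1.isLt; omega)]; exact hP1
        · refine ⟨((j2 : ℕ) : ZMod n), ?_, ?_⟩
          · rw [key j2]; exact hj2
          · rw [r_cast hm (show (j2:ℕ) ≤ m by have := j2.isLt; omega)]; exact hP2⟩
      left_inv := fun a => Subtype.ext (funext fun x => rep_true hm a.2.2 x)
      right_inv := fun b => Subtype.ext (funext fun j => by
        have hidx : (⟨min (((j:ℕ):ZMod n)).val (n - (((j:ℕ):ZMod n)).val),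
            r_lt hm (((j:ℕ):ZMod n))⟩ : Fin (m+1)) = j :=
          Fin.ext (r_cast hm (by have := j.isLt; omega))
        show b.1 ⟨min (((j:ℕ):ZMod n)).val (n - (((j:ℕ):ZMod n)).val),
            r_lt hm (((j:ℕ):ZMod n))⟩ = b.1 j
        rw [hidx]) }
  -- Step 2: split into low/high parts
  have e2 : {b : Fin (m+1) → Bool //
        (∃ j : Fin (m+1), b j = true ∧ 2 * (j : ℕ) ≤ m) ∧
        (∃ j : Fin (m+1), b j = true ∧ m < 2 * (j : ℕ))} ≃
      {u : {j : Fin (m+1) // 2 * (j : ℕ) ≤ m} → Bool // ∃ j, u j = true} ×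
      {v : {j : Fin (m+1) // ¬ (2 * (j : ℕ) ≤ m)} → Bool // ∃ j, v j = true} := by
    refine (Equiv.subtypeEquiv
      (Equiv.piEquivPiSubtypeProd (fun j : Fin (m+1) => 2 * (j : ℕ) ≤ m) (fun _ => Bool))
      ?_).trans Equiv.subtypeProdEquivProd
    intro b
    constructor
    · rintro ⟨⟨j, hj, hjp⟩, ⟨k, hk, hkp⟩⟩
      exact ⟨⟨⟨j, hjp⟩, hj⟩, ⟨⟨k, by omega⟩, hk⟩⟩
    · rintro ⟨⟨⟨j, hjp⟩, hj⟩, ⟨⟨k, hkp⟩, hk⟩⟩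
      exact ⟨⟨j, hj, hjp⟩, ⟨k, hk, by omega⟩⟩
  have hcard : {a : ZMod n → Bool | GoodFun n a ∧ ∀ i, a (-i) = a i}.ncard
      = (2 ^ (m/2 + 1) - 1) * (2 ^ (m - m/2) - 1) := by
    rw [← Nat.card_coe_set_eq, Nat.card_congr (e1.trans e2), Nat.card_prod,
      card_exists_true, card_exists_true, card_low, card_high]
  rw [hcard]
  have h2 : (1:ℕ) ≤ 2 ^ (m/2 + 1) := Nat.one_le_two_pow
  have h3 : (1:ℕ) ≤ 2 ^ (m - m/2) := Nat.one_le_two_pow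
  have hcast : (((2 ^ (m/2 + 1) - 1) * (2 ^ (m - m/2) - 1) : ℕ) : ℤ)
      = ((2:ℤ) ^ (m/2 + 1) - 1) * ((2:ℤ) ^ (m - m/2) - 1) := by
    push_cast [h2, h3]
    ring
  rw [hcast]
  clear e1 e2 hcard hcast h2 h3
  rcases Nat.even_or_odd m with he | ho
  · obtain ⟨t, ht⟩ := he
    have e1' : m / 2 + 1 = t + 1 := by omega
    have e2' : m - m / 2 = t := by omega
    have e3' : (n + 1) / 2 = 2 * t + 1 := by omega
    have e4' : (n - 1) / 4 = t := by omega
    have e5' : n % 4 = 1 := by omega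
    rw [e1', e2', if_pos e5', e3', e4']
    have p1 : (2:ℤ) ^ (2 * t + 1) = 2 ^ t * 2 ^ t * 2 := by
      rw [pow_succ, two_mul, pow_add]
    have p2 : (2:ℤ) ^ (t + 1) = 2 ^ t * 2 := pow_succ 2 t
    rw [p1, p2]; ring
  · obtain ⟨t, ht⟩ := ho
    have e1' : m / 2 + 1 = t + 1 := by omega
    have e2' : m - m / 2 = t + 1 := by omega
    have e3' : (n + 1) / 2 = 2 * t + 2 := by omega
    have e4' : (n + 5) / 4 = t + 2 := by omega
    have e5' : ¬ (n % 4 = 1) := by omega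
    rw [e1', e2', if_neg e5', e3', e4']
    have p1 : (2:ℤ) ^ (2 * t + 2) = (2 ^ t * 2) * (2 ^ t * 2) := by
      rw [show 2*t+2 = (t+1)+(t+1) by ring, pow_add, pow_succ]
    have p2 : (2:ℤ) ^ (t + 1) = 2 ^ t * 2 := pow_succ 2 t
    have p3 : (2:ℤ) ^ (t + 2) = 2 ^ t * 2 * 2 := by rw [pow_succ, pow_succ]
    rw [p1, p2, p3]; ring
end

section
/- Let n≥3 be odd, let 3≤m≤n, and let σ be the reflection x ↦ n - x (mod n). The number of good binary n-tuples with exactly m ones fixed by σ equals binom(⌊n/2⌋, ⌊m/2⌋) - binom(⌊n/4⌋, ⌊m/2⌋) - binom(⌊(n+2)/4⌋, m/2), where binom(x, m/2)=0 when m is odd. -/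
namespace AuxRefl

/-- Encode a symmetric tuple from a finset of representatives in `[1, n/2]` and value at 0. -/
def enc (n : ℕ) (s : Finset ℕ) (b : Bool) : ZMod n → Bool :=
  fun i => if i = 0 then b else decide (min i.val (n - i.val) ∈ s)

def sOf (n : ℕ) (a : ZMod n → Bool) : Finset ℕ :=
  (Finset.Icc 1 (n / 2)).filter (fun j => a ((j : ℕ) : ZMod n) = true)

variable {n : ℕ}

lemma val_cast_lt (hn : 3 ≤ n) {u : ℕ} (hu : u < n) : ((u : ZMod n)).val = u := by
  haveI : NeZero n := ⟨by omega⟩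
  rw [ZMod.val_natCast, Nat.mod_eq_of_lt hu]

lemma cast_ne_zero' (hn : 3 ≤ n) {u : ℕ} (hu : u < n) (hu0 : u ≠ 0) : (u : ZMod n) ≠ 0 := by
  haveI : NeZero n := ⟨by omega⟩
  intro h
  have := (ZMod.val_eq_zero _).mpr h
  rw [val_cast_lt hn hu] at this; omega

lemma enc_eval (hn : 3 ≤ n) (s : Finset ℕ) (b : Bool) {u : ℕ} (hu : u < n) (hu0 : u ≠ 0) :
    enc n s b ((u : ZMod n)) = decide (min u (n - u) ∈ s) := by
  rw [enc, if_neg (cast_ne_zero' hn hu hu0), val_cast_lt hn hu]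

lemma enc_symm (hn : 3 ≤ n) (s : Finset ℕ) (b : Bool) (i : ZMod n) :
    enc n s b (-i) = enc n s b i := by
  haveI : NeZero n := ⟨by omega⟩
  by_cases h : i = 0
  · subst h; simp
  · have hv : i.val < n := ZMod.val_lt i
    have hv0 : i.val ≠ 0 := fun h' => h ((ZMod.val_eq_zero i).mp h')
    have hni : (-i) ≠ 0 := by simpa using (neg_ne_zero.mpr h)
    rw [enc, enc, if_neg hni, if_neg h, ZMod.neg_val, if_neg h]
    have : n - (n - i.val) = i.val := by omega
    rw [this]
    rw [Nat.min_comm]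

lemma decode (hn : 3 ≤ n) (hodd : Odd n) (a : ZMod n → Bool) (ha : ∀ i, a (-i) = a i) :
    a = enc n (sOf n a) (a 0) := by
  haveI : NeZero n := ⟨by omega⟩
  funext i
  by_cases h : i = 0
  · subst h; simp [enc]
  · have hv : i.val < n := ZMod.val_lt i
    have hv0 : i.val ≠ 0 := fun h' => h ((ZMod.val_eq_zero i).mp h')
    rw [enc]
    rw [if_neg h]
    obtain ⟨N, hN⟩ := hodd
    by_cases hle : i.val ≤ n / 2
    · have hmin : min i.val (n - i.val) = i.val := by omega
      rw [hmin, sOf]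
      have hcast : ((i.val : ℕ) : ZMod n) = i := ZMod.natCast_rightInverse i
      simp only [Finset.mem_filter, Finset.mem_Icc, hcast]
      have : (1 ≤ i.val ∧ i.val ≤ n / 2) := ⟨by omega, hle⟩
      simp [this]
    · have hmin : min i.val (n - i.val) = n - i.val := by omega
      rw [hmin, sOf]
      have hcast : (((n - i.val) : ℕ) : ZMod n) = -i := by
        have : ((n : ℕ) : ZMod n) = 0 := ZMod.natCast_self n
        push_cast [Nat.cast_sub (le_of_lt hv)]
        rw [this, ZMod.natCast_rightInverse i]
        ring
      simp only [Finset.mem_filter, Finset.mem_Icc, hcast, ha i]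
      have : (1 ≤ n - i.val ∧ n - i.val ≤ n / 2) := ⟨by omega, by omega⟩
      simp [this]

lemma sOf_enc (hn : 3 ≤ n) {s : Finset ℕ} (hs : s ⊆ Finset.Icc 1 (n/2)) (b : Bool) :
    sOf n (enc n s b) = s := by
  haveI : NeZero n := ⟨by omega⟩
  ext j
  simp only [sOf, Finset.mem_filter, Finset.mem_Icc]
  constructor
  · rintro ⟨⟨h1, h2⟩, h3⟩
    have hjn : j < n := by omega
    rw [enc_eval hn s b hjn (by omega)] at h3
    have hmin : min j (n - j) = j := by omega
    rw [hmin] at h3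
    exact of_decide_eq_true h3
  · intro hj
    have hj' := hs hj
    simp only [Finset.mem_Icc] at hj'
    obtain ⟨h1, h2⟩ := hj'
    have hjn : j < n := by omega
    refine ⟨⟨h1, h2⟩, ?_⟩
    rw [enc_eval hn s b hjn (by omega)]
    have hmin : min j (n - j) = j := by omega
    rw [hmin]
    exact decide_eq_true hj

lemma onesCount_enc (hn : 3 ≤ n) (hodd : Odd n) {s : Finset ℕ}
    (hs : s ⊆ Finset.Icc 1 (n/2)) (b : Bool) :
    {i : ZMod n | enc n s b i = true}.ncard = 2 * s.card + b.toNat := by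
  haveI : NeZero n := ⟨by omega⟩
  obtain ⟨N, hN⟩ := hodd
  have hval : ∀ j ∈ s, 1 ≤ j ∧ j ≤ n / 2 := by
    intro j hj; simpa [Finset.mem_Icc] using hs hj
  set F : Finset (ZMod n) :=
    (s.image (fun j => ((j : ℕ) : ZMod n)) ∪ s.image (fun j => ((n - j : ℕ) : ZMod n))) ∪
      (if b then {(0 : ZMod n)} else ∅) with hF
  have hset : {i : ZMod n | enc n s b i = true} = ↑F := by
    ext i
    simp only [Set.mem_setOf_eq, hF, Finset.coe_union, Set.mem_union, Finset.coe_image,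
      Set.mem_image, Finset.mem_coe]
    constructor
    · intro hi
      rw [enc] at hi
      by_cases h0 : i = 0
      · subst h0; rw [if_pos rfl] at hi
        right; cases b <;> simp_all
      · rw [if_neg h0] at hi
        have hmem := of_decide_eq_true hi
        have hv : i.val < n := ZMod.val_lt i
        left
        by_cases hle : i.val ≤ n / 2
        · left
          refine ⟨i.val, by simpa [min_eq_left (by omega : i.val ≤ n - i.val)] using hmem, ?_⟩
          exact ZMod.natCast_rightInverse i
        · right
          have hv0 : i.val ≠ 0 := fun h' => h0 ((ZMod.val_eq_zero i).mp h')
          refine ⟨n - i.val, by simpa [min_eq_right (by omega : n - i.val ≤ i.val)] using hmem, ?_⟩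
          rw [(by omega : n - (n - i.val) = i.val)]
          exact ZMod.natCast_rightInverse i
    · intro hi
      rcases hi with (⟨j, hj, rfl⟩ | ⟨j, hj, rfl⟩) | h0
      · obtain ⟨h1, h2⟩ := hval j hj
        rw [enc_eval hn s b (by omega) (by omega)]
        simp [min_eq_left (by omega : j ≤ n - j), hj]
      · obtain ⟨h1, h2⟩ := hval j hj
        rw [enc_eval hn s b (by omega : n - j < n) (by omega)]
        rw [(by omega : n - (n - j) = j)]
        simp [min_eq_right (by omega : j ≤ n - j), hj]
      · rcases Bool.eq_false_or_eq_true b with hb | hb <;> subst hb <;> simp_all [enc]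
  rw [hset, Set.ncard_coe_finset]
  have hinj1 : Set.InjOn (fun j => ((j : ℕ) : ZMod n)) ↑s := by
    intro x hx y hy hxy
    obtain ⟨hx1, hx2⟩ := hval x hx
    obtain ⟨hy1, hy2⟩ := hval y hy
    have := congrArg ZMod.val hxy
    simpa [val_cast_lt hn (by omega : x < n), val_cast_lt hn (by omega : y < n)] using this
  have hinj2 : Set.InjOn (fun j => ((n - j : ℕ) : ZMod n)) ↑s := by
    intro x hx y hy hxy
    obtain ⟨hx1, hx2⟩ := hval x hx
    obtain ⟨hy1, hy2⟩ := hval y hy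
    have := congrArg ZMod.val hxy
    simp only [val_cast_lt hn (by omega : n - x < n), val_cast_lt hn (by omega : n - y < n)] at this
    omega
  have hd12 : Disjoint (s.image (fun j => ((j : ℕ) : ZMod n)))
      (s.image (fun j => ((n - j : ℕ) : ZMod n))) := by
    rw [Finset.disjoint_left]
    rintro x hx hx'
    simp only [Finset.mem_image] at hx hx'
    obtain ⟨j, hj, rfl⟩ := hx
    obtain ⟨j', hj', he⟩ := hx'
    obtain ⟨h1, h2⟩ := hval j hj
    obtain ⟨h1', h2'⟩ := hval j' hj'
    have := congrArg ZMod.val he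
    simp only [val_cast_lt hn (by omega : n - j' < n), val_cast_lt hn (by omega : j < n)] at this
    omega
  have hd3 : Disjoint (s.image (fun j => ((j : ℕ) : ZMod n)) ∪
      s.image (fun j => ((n - j : ℕ) : ZMod n))) ((if b then {(0 : ZMod n)} else ∅)) := by
    rw [Finset.disjoint_right]
    intro x hx hx'
    rcases Bool.eq_false_or_eq_true b with hb | hb
    · subst hb
      rw [if_pos rfl, Finset.mem_singleton] at hx
      subst hx
      simp only [Finset.mem_union, Finset.mem_image] at hx'
      rcases hx' with ⟨j, hj, he⟩ | ⟨j, hj, he⟩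
      · obtain ⟨h1, h2⟩ := hval j hj
        exact cast_ne_zero' hn (by omega) (by omega) he
      · obtain ⟨h1, h2⟩ := hval j hj
        exact cast_ne_zero' hn (by omega : n - j < n) (by omega) he
    · subst hb; simp at hx
  rw [hF, Finset.card_union_of_disjoint hd3, Finset.card_union_of_disjoint hd12,
    Finset.card_image_of_injOn hinj1, Finset.card_image_of_injOn hinj2]
  rcases Bool.eq_false_or_eq_true b with hb | hb <;> subst hb <;> simp <;> omega

lemma mem_j (hn : 3 ≤ n) {s : Finset ℕ} (hs : s ⊆ Finset.Icc 1 (n/2)) (b : Bool)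
    {j : ℕ} (hj : j ∈ s) : enc n s b ((j : ZMod n)) = true := by
  have hb : 1 ≤ j ∧ j ≤ n / 2 := by simpa [Finset.mem_Icc] using hs hj
  rw [enc_eval hn s b (by omega) (by omega)]
  simp [min_eq_left (by omega : j ≤ n - j), hj]

lemma mem_nj (hn : 3 ≤ n) {s : Finset ℕ} (hs : s ⊆ Finset.Icc 1 (n/2)) (b : Bool)
    {j : ℕ} (hj : j ∈ s) : enc n s b (((n - j : ℕ) : ZMod n)) = true := by
  have hb : 1 ≤ j ∧ j ≤ n / 2 := by simpa [Finset.mem_Icc] using hs hj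
  rw [enc_eval hn s b (by omega : n - j < n) (by omega)]
  rw [(by omega : n - (n - j) = j)]
  simp [min_eq_right (by omega : j ≤ n - j), hj]

/-- Produce the goodness step: from position with value `w`, jump to target value `u`. -/
lemma step_to (hn : 3 ≤ n) (s : Finset ℕ) (b : Bool) {i : ZMod n} {w u : ℕ}
    (hiw : i = ((w : ℕ) : ZMod n))
    (hu : enc n s b ((u : ZMod n)) = true)
    (h1 : w < u ∧ 2 * (u - w) < n ∨ u + n > w ∧ u ≤ w ∧ 2 * (u + n - w) < n ∧ 0 < u + n - w) :
    ∃ k : ℕ, 0 < k ∧ 2 * k < n ∧ enc n s b (i + (k : ZMod n)) = true := by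
  haveI : NeZero n := ⟨by omega⟩
  subst hiw
  rcases h1 with ⟨hlt, hk⟩ | ⟨_, hle, hk, hk0⟩
  · refine ⟨u - w, by omega, hk, ?_⟩
    have : ((w : ℕ) : ZMod n) + ((u - w : ℕ) : ZMod n) = ((u : ℕ) : ZMod n) := by
      push_cast [Nat.cast_sub (le_of_lt hlt)]; ring
    rw [this]; exact hu
  · refine ⟨u + n - w, hk0, hk, ?_⟩
    have : ((w : ℕ) : ZMod n) + ((u + n - w : ℕ) : ZMod n) = ((u : ℕ) : ZMod n) := by
      push_cast [Nat.cast_sub (by omega : w ≤ u + n)]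
      rw [ZMod.natCast_self]
      ring
    rw [this]; exact hu

lemma good_of (hn : 3 ≤ n) (hodd : Odd n) {s : Finset ℕ} (hs : s ⊆ Finset.Icc 1 (n/2))
    (b : Bool) (hbig : ∃ j ∈ s, n/4 < j) (hsmall : b = true ∨ ∃ j ∈ s, j ≤ n/4) :
    GoodFun n (enc n s b) := by
  haveI : NeZero n := ⟨by omega⟩
  obtain ⟨N, hN⟩ := hodd
  obtain ⟨j2, hj2s, hj2⟩ := hbig
  have hb2 : 1 ≤ j2 ∧ j2 ≤ n / 2 := by simpa [Finset.mem_Icc] using hs hj2s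
  refine ⟨⟨(j2 : ZMod n), mem_j hn hs b hj2s⟩, ?_⟩
  intro i hi
  have hw : i.val < n := ZMod.val_lt i
  have hiw : i = ((i.val : ℕ) : ZMod n) := (ZMod.natCast_rightInverse i).symm
  set w := i.val with hwdef
  rcases hsmall with hb | ⟨j1, hj1s, hj1⟩
  · subst hb
    rcases lt_or_ge w j2 with h | h
    · exact step_to hn s true hiw (mem_j hn hs true hj2s) (Or.inl ⟨h, by omega⟩)
    rcases lt_or_ge w (n - j2) with h' | h'
    · exact step_to hn s true hiw (mem_nj hn hs true hj2s) (Or.inl ⟨by omega, by omega⟩)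
    · have h0 : enc n s true (((0:ℕ) : ZMod n)) = true := by
        norm_num [enc]
      exact step_to hn s true hiw h0 (Or.inr ⟨by omega, by omega, by omega, by omega⟩)
  · have hb1 : 1 ≤ j1 ∧ j1 ≤ n / 2 := by simpa [Finset.mem_Icc] using hs hj1s
    rcases lt_or_ge w j1 with h | h
    · exact step_to hn s b hiw (mem_j hn hs b hj1s) (Or.inl ⟨h, by omega⟩)
    rcases lt_or_ge w j2 with h' | h'
    · exact step_to hn s b hiw (mem_j hn hs b hj2s) (Or.inl ⟨h', by omega⟩)
    rcases lt_or_ge w (n - j2) with h'' | h''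
    · exact step_to hn s b hiw (mem_nj hn hs b hj2s) (Or.inl ⟨by omega, by omega⟩)
    rcases lt_or_ge w (n - j1) with h''' | h'''
    · exact step_to hn s b hiw (mem_nj hn hs b hj1s) (Or.inl ⟨by omega, by omega⟩)
    · exact step_to hn s b hiw (mem_j hn hs b hj1s) (Or.inr ⟨by omega, by omega, by omega, by omega⟩)

lemma notGood_all_small (hn : 3 ≤ n) (hodd : Odd n) {s : Finset ℕ}
    (hs : s ⊆ Finset.Icc 1 (n/2)) (b : Bool) (hne : s.Nonempty)
    (hall : ∀ j ∈ s, j ≤ n/4) : ¬ GoodFun n (enc n s b) := by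
  haveI : NeZero n := ⟨by omega⟩
  obtain ⟨N, hN⟩ := hodd
  rintro ⟨-, hgood⟩
  set j₀ := s.max' hne with hj₀
  have hj₀s : j₀ ∈ s := s.max'_mem hne
  have hb0 : 1 ≤ j₀ ∧ j₀ ≤ n / 2 := by simpa [Finset.mem_Icc] using hs hj₀s
  have hq0 : j₀ ≤ n / 4 := hall _ hj₀s
  obtain ⟨k, hk0, hk, hkm⟩ := hgood ((j₀ : ZMod n)) (mem_j hn hs b hj₀s)
  have hcast : ((j₀ : ZMod n) + ((k : ℕ) : ZMod n)) = ((j₀ + k : ℕ) : ZMod n) := by push_cast; ring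
  rw [hcast, enc_eval hn s b (by omega : j₀ + k < n) (by omega)] at hkm
  have hmem := of_decide_eq_true hkm
  rcases le_or_gt (j₀ + k) (n / 2) with h | h
  · rw [min_eq_left (by omega)] at hmem
    have := s.le_max' _ hmem
    omega
  · rw [min_eq_right (by omega)] at hmem
    have h2 := s.le_max' _ hmem
    omega

lemma notGood_all_big (hn : 3 ≤ n) (hodd : Odd n) {s : Finset ℕ}
    (hs : s ⊆ Finset.Icc 1 (n/2)) (hne : s.Nonempty)
    (hall : ∀ j ∈ s, n/4 < j) : ¬ GoodFun n (enc n s false) := by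
  haveI : NeZero n := ⟨by omega⟩
  obtain ⟨N, hN⟩ := hodd
  rintro ⟨-, hgood⟩
  set j₀ := s.min' hne with hj₀
  have hj₀s : j₀ ∈ s := s.min'_mem hne
  have hb0 : 1 ≤ j₀ ∧ j₀ ≤ n / 2 := by simpa [Finset.mem_Icc] using hs hj₀s
  have hq0 : n / 4 < j₀ := hall _ hj₀s
  obtain ⟨k, hk0, hk, hkm⟩ := hgood (((n - j₀ : ℕ) : ZMod n)) (mem_nj hn hs false hj₀s)
  have hcast : (((n - j₀ : ℕ) : ZMod n) + ((k : ℕ) : ZMod n)) = ((n - j₀ + k : ℕ) : ZMod n) := by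
    push_cast; ring
  rw [hcast] at hkm
  rcases lt_or_ge (n - j₀ + k) n with h | h
  · rw [enc_eval hn s false h (by omega)] at hkm
    have hmem := of_decide_eq_true hkm
    rw [min_eq_right (by omega)] at hmem
    have := s.min'_le _ hmem
    omega
  · have hc2 : ((n - j₀ + k : ℕ) : ZMod n) = ((k - j₀ : ℕ) : ZMod n) := by
      rw [(by omega : n - j₀ + k = n + (k - j₀))]
      push_cast
      rw [ZMod.natCast_self]
      ring
    rw [hc2] at hkm
    rcases Nat.eq_zero_or_pos (k - j₀) with h0 | h0
    · rw [h0] at hkm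
      simp [enc] at hkm
    · rw [enc_eval hn s false (by omega : k - j₀ < n) (by omega)] at hkm
      have hmem := of_decide_eq_true hkm
      rw [min_eq_left (by omega)] at hmem
      have := hall _ hmem
      omega

lemma count_odd (N q c : ℕ) (hq : q ≤ N) :
    (((Finset.Icc 1 N).powersetCard c).filter (fun s => ∃ j ∈ s, q < j)).card
      + q.choose c = N.choose c := by
  have hsplit := Finset.card_filter_add_card_filter_not
    (s := (Finset.Icc 1 N).powersetCard c) (p := fun s => ∃ j ∈ s, q < j)
  have hneg : ((Finset.Icc 1 N).powersetCard c).filter (fun s => ¬ ∃ j ∈ s, q < j)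
      = (Finset.Icc 1 q).powersetCard c := by
    ext s
    constructor
    · intro hs
      rw [Finset.mem_filter] at hs
      obtain ⟨hp, hall⟩ := hs
      rw [Finset.mem_powersetCard] at hp ⊢
      refine ⟨fun j hj => ?_, hp.2⟩
      have h1 := hp.1 hj
      simp only [Finset.mem_Icc] at h1 ⊢
      refine ⟨h1.1, ?_⟩
      by_contra hq'
      exact hall ⟨j, hj, by omega⟩
    · intro hs
      rw [Finset.mem_powersetCard] at hs
      rw [Finset.mem_filter, Finset.mem_powersetCard]
      refine ⟨⟨fun j hj => ?_, hs.2⟩, ?_⟩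
      · have := hs.1 hj; simp only [Finset.mem_Icc] at this ⊢; omega
      · rintro ⟨j, hj, hq'⟩
        have := hs.1 hj; simp only [Finset.mem_Icc] at this; omega
  rw [hneg] at hsplit
  simp only [Finset.card_powersetCard, Nat.card_Icc] at hsplit
  simpa [Nat.add_sub_cancel] using hsplit

lemma count_even (N q c : ℕ) (hq : q ≤ N) (hc : 1 ≤ c) :
    (((Finset.Icc 1 N).powersetCard c).filter
        (fun s => (∃ j ∈ s, q < j) ∧ (∃ j ∈ s, j ≤ q))).card
      + q.choose c + (N - q).choose c = N.choose c := by
  have hsplit := Finset.card_filter_add_card_filter_not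
    (s := (Finset.Icc 1 N).powersetCard c)
    (p := fun s => (∃ j ∈ s, q < j) ∧ (∃ j ∈ s, j ≤ q))
  have hneg : ((Finset.Icc 1 N).powersetCard c).filter
      (fun s => ¬ ((∃ j ∈ s, q < j) ∧ (∃ j ∈ s, j ≤ q)))
      = ((Finset.Icc 1 q).powersetCard c) ∪ ((Finset.Icc (q+1) N).powersetCard c) := by
    ext s
    constructor
    · intro hs
      rw [Finset.mem_filter] at hs
      obtain ⟨hp, hnab⟩ := hs
      rw [Finset.mem_powersetCard] at hp
      rw [not_and_or] at hnab
      rw [Finset.mem_union, Finset.mem_powersetCard, Finset.mem_powersetCard]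
      rcases hnab with h | h
      · left
        refine ⟨fun j hj => ?_, hp.2⟩
        have h1 := hp.1 hj
        simp only [Finset.mem_Icc] at h1 ⊢
        refine ⟨h1.1, ?_⟩
        by_contra hq'
        exact h ⟨j, hj, by omega⟩
      · right
        refine ⟨fun j hj => ?_, hp.2⟩
        have h1 := hp.1 hj
        simp only [Finset.mem_Icc] at h1 ⊢
        refine ⟨?_, h1.2⟩
        by_contra hq'
        exact h ⟨j, hj, by omega⟩
    · intro hs
      rw [Finset.mem_union, Finset.mem_powersetCard, Finset.mem_powersetCard] at hs
      rw [Finset.mem_filter, Finset.mem_powersetCard]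
      rcases hs with ⟨hsub, hcard⟩ | ⟨hsub, hcard⟩
      · refine ⟨⟨fun j hj => ?_, hcard⟩, ?_⟩
        · have := hsub hj; simp only [Finset.mem_Icc] at this ⊢; omega
        · rintro ⟨⟨j, hj, hq'⟩, -⟩
          have := hsub hj; simp only [Finset.mem_Icc] at this; omega
      · refine ⟨⟨fun j hj => ?_, hcard⟩, ?_⟩
        · have := hsub hj; simp only [Finset.mem_Icc] at this ⊢; omega
        · rintro ⟨-, ⟨j, hj, hq'⟩⟩
          have := hsub hj; simp only [Finset.mem_Icc] at this; omega
  have hdisj : Disjoint ((Finset.Icc 1 q).powersetCard c)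
      ((Finset.Icc (q+1) N).powersetCard c) := by
    rw [Finset.disjoint_left]
    rintro s hs hs'
    simp only [Finset.mem_powersetCard] at hs hs'
    obtain ⟨j, hj⟩ := Finset.card_pos.mp (by omega : 0 < s.card)
    have h1 := hs.1 hj
    have h2 := hs'.1 hj
    simp only [Finset.mem_Icc] at h1 h2
    omega
  rw [hneg, Finset.card_union_of_disjoint hdisj] at hsplit
  simp only [Finset.card_powersetCard, Nat.card_Icc] at hsplit
  rw [(by omega : q + 1 - 1 = q), (by omega : N + 1 - (q + 1) = N - q),
    (by omega : N + 1 - 1 = N)] at hsplit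
  omega

end AuxRefl

/-- For odd `n ≥ 3` and `3 ≤ m ≤ n`, the number of good binary `n`-tuples with exactly
`m` ones fixed by the reflection `x ↦ -x (mod n)` equals
`C(⌊n/2⌋,⌊m/2⌋) - C(⌊n/4⌋,⌊m/2⌋) - C(⌊(n+2)/4⌋, m/2)`, the last term vanishing for
odd `m`. -/
theorem fix_good_m_reflection_odd (n m : ℕ) (hn : 3 ≤ n) (hodd : Odd n)
    (hm : 3 ≤ m) (hmn : m ≤ n) :
    ({a : ZMod n → Bool | GoodFun n a ∧ onesCount n a = m ∧ ∀ i, a (-i) = a i}.ncard : ℤ)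
      = (n / 2).choose (m / 2) - (n / 4).choose (m / 2)
        - if Even m then ((n + 2) / 4).choose (m / 2) else 0 := by
  haveI : NeZero n := ⟨by omega⟩
  obtain ⟨K, hK⟩ := hodd
  have hodd' : Odd n := ⟨K, hK⟩
  by_cases hme : Even m
  · -- even case: b = false
    obtain ⟨t, ht⟩ := hme
    set F := (((Finset.Icc 1 (n/2)).powersetCard (m/2)).filter
        (fun s => (∃ j ∈ s, n/4 < j) ∧ (∃ j ∈ s, j ≤ n/4))) with hFdef
    have hAF : {a : ZMod n → Bool | GoodFun n a ∧ onesCount n a = m ∧ ∀ i, a (-i) = a i}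
        = (fun s => AuxRefl.enc n s false) '' ↑F := by
      ext a
      simp only [Set.mem_setOf_eq, Set.mem_image, Finset.mem_coe]
      constructor
      · rintro ⟨hg, hones, hsym⟩
        have hdec := AuxRefl.decode hn hodd' a hsym
        have hssub : AuxRefl.sOf n a ⊆ Finset.Icc 1 (n/2) := Finset.filter_subset _ _
        have hcnt : 2 * (AuxRefl.sOf n a).card + (a 0).toNat = m := by
          rw [← hones]
          show _ = onesCount n a
          rw [onesCount]
          conv_rhs => rw [hdec]
          rw [AuxRefl.onesCount_enc hn hodd' hssub (a 0)]
        have ha0 : a 0 = false := by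
          cases h : a 0
          · rfl
          · rw [h] at hcnt; simp at hcnt; omega
        rw [ha0] at hdec hcnt
        simp only [Bool.toNat_false, Nat.add_zero] at hcnt
        have hcard : (AuxRefl.sOf n a).card = m / 2 := by omega
        have hne : (AuxRefl.sOf n a).Nonempty := by
          rw [← Finset.card_pos, hcard]; omega
        rw [hdec] at hg
        have hbig : ∃ j ∈ AuxRefl.sOf n a, n/4 < j := by
          by_contra hno
          push_neg at hno
          exact AuxRefl.notGood_all_small hn hodd' hssub false hne
            (fun j hj => by have := hno j hj; omega) hg
        have hsmall : ∃ j ∈ AuxRefl.sOf n a, j ≤ n/4 := by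
          by_contra hno
          push_neg at hno
          exact AuxRefl.notGood_all_big hn hodd' hssub hne
            (fun j hj => by have := hno j hj; omega) hg
        refine ⟨AuxRefl.sOf n a, ?_, hdec.symm⟩
        rw [hFdef, Finset.mem_filter, Finset.mem_powersetCard]
        exact ⟨⟨hssub, hcard⟩, hbig, hsmall⟩
      · rintro ⟨s, hsF, rfl⟩
        rw [hFdef, Finset.mem_filter, Finset.mem_powersetCard] at hsF
        obtain ⟨⟨hsub, hcard⟩, hbig, hsmall⟩ := hsF
        refine ⟨AuxRefl.good_of hn hodd' hsub false hbig (Or.inr hsmall), ?_,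
          AuxRefl.enc_symm hn s false⟩
        rw [onesCount, AuxRefl.onesCount_enc hn hodd' hsub false, hcard]
        simp; omega
    have hinj : Set.InjOn (fun s => AuxRefl.enc n s false) ↑F := by
      intro s hs t htm he
      rw [hFdef, Finset.mem_coe, Finset.mem_filter, Finset.mem_powersetCard] at hs htm
      have h1 := AuxRefl.sOf_enc hn hs.1.1 false
      have h2 := AuxRefl.sOf_enc hn htm.1.1 false
      rw [← h1, ← h2]; exact congrArg (AuxRefl.sOf n) he
    rw [hAF, Set.ncard_image_of_injOn hinj, Set.ncard_coe_finset]
    have hcnt := AuxRefl.count_even (n/2) (n/4) (m/2) (by omega) (by omega)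
    rw [if_pos ⟨t, ht⟩]
    have h42 : (n + 2) / 4 = n / 2 - n / 4 := by omega
    rw [h42, ← hFdef] at *
    omega
  · -- odd case: b = true
    have hm2 : m % 2 = 1 := Nat.not_even_iff.mp hme
    set F := (((Finset.Icc 1 (n/2)).powersetCard (m/2)).filter
        (fun s => ∃ j ∈ s, n/4 < j)) with hFdef
    have hAF : {a : ZMod n → Bool | GoodFun n a ∧ onesCount n a = m ∧ ∀ i, a (-i) = a i}
        = (fun s => AuxRefl.enc n s true) '' ↑F := by
      ext a
      simp only [Set.mem_setOf_eq, Set.mem_image, Finset.mem_coe]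
      constructor
      · rintro ⟨hg, hones, hsym⟩
        have hdec := AuxRefl.decode hn hodd' a hsym
        have hssub : AuxRefl.sOf n a ⊆ Finset.Icc 1 (n/2) := Finset.filter_subset _ _
        have hcnt : 2 * (AuxRefl.sOf n a).card + (a 0).toNat = m := by
          rw [← hones]
          show _ = onesCount n a
          rw [onesCount]
          conv_rhs => rw [hdec]
          rw [AuxRefl.onesCount_enc hn hodd' hssub (a 0)]
        have ha0 : a 0 = true := by
          cases h : a 0
          · rw [h] at hcnt; simp at hcnt; omega
          · rfl
        rw [ha0] at hdec hcnt
        simp only [Bool.toNat_true] at hcnt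
        have hcard : (AuxRefl.sOf n a).card = m / 2 := by omega
        have hne : (AuxRefl.sOf n a).Nonempty := by
          rw [← Finset.card_pos, hcard]; omega
        rw [hdec] at hg
        have hbig : ∃ j ∈ AuxRefl.sOf n a, n/4 < j := by
          by_contra hno
          push_neg at hno
          exact AuxRefl.notGood_all_small hn hodd' hssub true hne
            (fun j hj => by have := hno j hj; omega) hg
        refine ⟨AuxRefl.sOf n a, ?_, hdec.symm⟩
        rw [hFdef, Finset.mem_filter, Finset.mem_powersetCard]
        exact ⟨⟨hssub, hcard⟩, hbig⟩
      · rintro ⟨s, hsF, rfl⟩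
        rw [hFdef, Finset.mem_filter, Finset.mem_powersetCard] at hsF
        obtain ⟨⟨hsub, hcard⟩, hbig⟩ := hsF
        refine ⟨AuxRefl.good_of hn hodd' hsub true hbig (Or.inl rfl), ?_,
          AuxRefl.enc_symm hn s true⟩
        rw [onesCount, AuxRefl.onesCount_enc hn hodd' hsub true, hcard]
        simp; omega
    have hinj : Set.InjOn (fun s => AuxRefl.enc n s true) ↑F := by
      intro s hs t htm he
      rw [hFdef, Finset.mem_coe, Finset.mem_filter, Finset.mem_powersetCard] at hs htm
      have h1 := AuxRefl.sOf_enc hn hs.1.1 true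
      have h2 := AuxRefl.sOf_enc hn htm.1.1 true
      rw [← h1, ← h2]; exact congrArg (AuxRefl.sOf n) he
    rw [hAF, Set.ncard_image_of_injOn hinj, Set.ncard_coe_finset]
    have hcnt := AuxRefl.count_odd (n/2) (n/4) (m/2) (by omega)
    rw [if_neg hme, ← hFdef] at *
    omega
end

section
/- Let n≥4 be even and let σ be the fixed-point-free reflection x ↦ n+1-x (mod n) of {1,...,n}. The number of good binary n-tuples fixed by σ equals 2^{n/2} - 2^{(n+4)/4} + 1 if n≡0 (mod 4), and 2^{n/2} - 2^{(n+6)/4} + 2 if n≡2 (mod 4). -/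
namespace FixGoodAux

/-- orbit index of a point of `ZMod (2*m)` under `i ↦ 1 - i`:
the orbit `{j+1, -j}` gets index `j ∈ [0, m)`. -/
def fval (m : ℕ) (i : ZMod (2*m)) : ℕ :=
  if i.val = 0 then 0 else if i.val ≤ m then i.val - 1 else 2*m - i.val

def Phi (m : ℕ) (S : Finset ℕ) : ZMod (2*m) → Bool := fun i => decide (fval m i ∈ S)

def F (m : ℕ) : Finset (Finset ℕ) :=
  (Finset.range m).powerset.filter
    (fun S => (∃ j ∈ S, j < m/2) ∧ (∃ j ∈ S, m - m/2 ≤ j))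

variable {m : ℕ}

lemma cast_val_eq (hm : 2 ≤ m) {v : ℕ} (hv : v < 2*m) :
    ((v : ℕ) : ZMod (2*m)).val = v :=
  ZMod.val_cast_of_lt hv

lemma cast_val_self (hm : 2 ≤ m) (i : ZMod (2*m)) :
    ((i.val : ℕ) : ZMod (2*m)) = i := by
  haveI : NeZero (2*m) := ⟨by omega⟩
  exact ZMod.natCast_rightInverse i

lemma val_lt' (hm : 2 ≤ m) (i : ZMod (2*m)) : i.val < 2*m := by
  haveI : NeZero (2*m) := ⟨by omega⟩
  exact ZMod.val_lt i

lemma one_sub_cast (hm : 2 ≤ m) {v : ℕ} (hv1 : 1 ≤ v) (hv : v ≤ 2*m) :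
    (1 : ZMod (2*m)) - ((v : ℕ) : ZMod (2*m)) = ((2*m + 1 - v : ℕ) : ZMod (2*m)) := by
  have h : ((2*m + 1 - v : ℕ) : ZMod (2*m)) + ((v : ℕ) : ZMod (2*m))
      = ((2*m + 1 : ℕ) : ZMod (2*m)) := by
    rw [← Nat.cast_add]; congr 1; omega
  have h2 : ((2*m + 1 : ℕ) : ZMod (2*m)) = 1 := by
    rw [Nat.cast_add, ZMod.natCast_self, Nat.cast_one, zero_add]
  rw [h2] at h
  exact (eq_sub_of_add_eq h).symm

lemma fval_lt (hm : 2 ≤ m) (i : ZMod (2*m)) : fval m i < m := by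
  have hv : i.val < 2*m := val_lt' hm i
  unfold fval; split_ifs <;> omega

lemma fval_one_sub (hm : 2 ≤ m) (i : ZMod (2*m)) : fval m (1 - i) = fval m i := by
  haveI : NeZero (2*m) := ⟨by omega⟩
  have hv : i.val < 2*m := val_lt' hm i
  have hi : ((i.val : ℕ) : ZMod (2*m)) = i := cast_val_self hm i
  rcases Nat.lt_or_ge i.val 1 with h0 | h1
  · have h0' : i.val = 0 := by omega
    have hiz : i = 0 := by rw [← hi, h0', Nat.cast_zero]
    rw [hiz, sub_zero]
    have hv1 : (1 : ZMod (2*m)).val = 1 := by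
      rw [ZMod.val_one_eq_one_mod]; exact Nat.mod_eq_of_lt (by omega)
    simp only [fval, hv1, ZMod.val_zero]
    split_ifs <;> first | omega | exact ‹False›.elim
  · have key : 1 - i = ((2*m + 1 - i.val : ℕ) : ZMod (2*m)) := by
      conv_lhs => rw [← hi]
      exact one_sub_cast hm h1 (by omega)
    rcases Nat.lt_or_ge i.val 2 with h2 | h2
    · have e : 2*m + 1 - i.val = 2*m := by omega
      rw [key, e, ZMod.natCast_self]
      simp only [fval, ZMod.val_zero]
      split_ifs <;> first | omega | exact ‹False›.elim
    · have hw : (1 - i).val = 2*m + 1 - i.val := by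
        rw [key]; exact cast_val_eq hm (by omega)
      simp only [fval, hw]
      split_ifs <;> first | omega | exact ‹False›.elim

lemma fval_cast_succ (hm : 2 ≤ m) {j : ℕ} (hj : j < m) :
    fval m ((j + 1 : ℕ) : ZMod (2*m)) = j := by
  have hw : ((j + 1 : ℕ) : ZMod (2*m)).val = j + 1 := cast_val_eq hm (by omega)
  simp only [fval, hw]
  split_ifs <;> first | omega | exact ‹False›.elim

lemma apply_rep (hm : 2 ≤ m) (a : ZMod (2*m) → Bool) (hsym : ∀ i, a (1 - i) = a i)
    (i : ZMod (2*m)) : a i = a ((fval m i + 1 : ℕ) : ZMod (2*m)) := by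
  have hv : i.val < 2*m := val_lt' hm i
  have hi : ((i.val : ℕ) : ZMod (2*m)) = i := cast_val_self hm i
  rcases Nat.lt_or_ge i.val 1 with h0 | h1
  · have h0' : i.val = 0 := by omega
    have hiz : i = 0 := by rw [← hi, h0', Nat.cast_zero]
    have hf : fval m i = 0 := by simp [fval, h0']
    rw [hf, hiz]
    have h01 : (0 : ZMod (2*m)) = 1 - ((0 + 1 : ℕ) : ZMod (2*m)) := by norm_num
    rw [h01, hsym]
  · rcases Nat.lt_or_ge i.val (m+1) with h2 | h2
    · have hf : fval m i = i.val - 1 := by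
        simp only [fval]; split_ifs <;> omega
      rw [hf, show i.val - 1 + 1 = i.val from by omega, hi]
    · have hf : fval m i = 2*m - i.val := by
        simp only [fval]; split_ifs <;> omega
      have key : (1 : ZMod (2*m)) - ((2*m - i.val + 1 : ℕ) : ZMod (2*m)) = i := by
        rw [one_sub_cast hm (by omega) (by omega),
          show 2*m + 1 - (2*m - i.val + 1) = i.val from by omega, hi]
      rw [hf]
      conv_lhs => rw [← key]
      exact hsym _

lemma Phi_sym (hm : 2 ≤ m) (S : Finset ℕ) (i : ZMod (2*m)) :
    Phi m S (1 - i) = Phi m S i := by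
  simp [Phi, fval_one_sub hm]

lemma Phi_cast_succ (hm : 2 ≤ m) (S : Finset ℕ) {j : ℕ} (hj : j < m) :
    Phi m S ((j + 1 : ℕ) : ZMod (2*m)) = decide (j ∈ S) := by
  unfold Phi
  rw [fval_cast_succ hm hj]

lemma mirror_cast (hm : 2 ≤ m) {j : ℕ} (hj : j < m) :
    ((2*m - j : ℕ) : ZMod (2*m)) = 1 - ((j + 1 : ℕ) : ZMod (2*m)) := by
  rw [one_sub_cast hm (by omega) (by omega),
    show 2*m + 1 - (j+1) = 2*m - j from by omega]

lemma back_mirror (hm : 2 ≤ m) {j : ℕ} (hj : j < m) :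
    (1 : ZMod (2*m)) - (((j + 1 : ℕ) : ZMod (2*m)) + ((m : ℕ) : ZMod (2*m)))
      = ((m - j : ℕ) : ZMod (2*m)) := by
  have h : ((j + 1 : ℕ) : ZMod (2*m)) + ((m : ℕ) : ZMod (2*m))
      = ((j + 1 + m : ℕ) : ZMod (2*m)) := by push_cast; ring
  rw [h, one_sub_cast hm (by omega) (by omega),
    show 2*m + 1 - (j+1+m) = m - j from by omega]

lemma good_shift {n : ℕ} {a : ZMod n → Bool} (c : ZMod n) (h : GoodFun n a) :
    GoodFun n (fun i => a (i + c)) := by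
  obtain ⟨⟨i0, h0⟩, h2⟩ := h
  refine ⟨⟨i0 - c, by simpa using h0⟩, ?_⟩
  intro i hi
  obtain ⟨k, hk0, hkn, hk⟩ := h2 (i + c) hi
  exact ⟨k, hk0, hkn, by simpa [add_right_comm] using hk⟩

lemma front (hm : 2 ≤ m) {a : ZMod (2*m) → Bool} (hsym : ∀ i, a (1 - i) = a i)
    (hg : GoodFun (2*m) a) :
    ∃ j, j < m/2 ∧ a ((j + 1 : ℕ) : ZMod (2*m)) = true := by
  by_contra hcon
  push_neg at hcon
  have hZ : ∀ v : ℕ, v < 2*m → (v ≤ m/2 ∨ 2*m + 1 - m/2 ≤ v) →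
      a ((v : ℕ) : ZMod (2*m)) = false := by
    intro v hv hor
    have hw : ((v:ℕ) : ZMod (2*m)).val = v := cast_val_eq hm hv
    have hflt : fval m ((v:ℕ) : ZMod (2*m)) < m/2 := by
      simp only [fval, hw]; split_ifs <;> omega
    rw [apply_rep hm a hsym ((v:ℕ) : ZMod (2*m))]
    simpa using hcon _ hflt
  obtain ⟨⟨i0, hi0⟩, hsucc⟩ := hg
  classical
  set P' : ℕ → Prop := fun v => m/2 + 1 ≤ v ∧ a ((v : ℕ) : ZMod (2*m)) = true with hP'
  have hi0P : P' i0.val ∧ i0.val ≤ 2*m - m/2 := by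
    have hv0 : i0.val < 2*m := val_lt' hm i0
    have hc0 : a ((i0.val : ℕ) : ZMod (2*m)) = true := by
      rw [cast_val_self hm i0]; exact hi0
    have hlow : m/2 + 1 ≤ i0.val := by
      by_contra hc
      have := hZ i0.val hv0 (Or.inl (by omega))
      rw [this] at hc0; exact Bool.false_ne_true hc0
    have hhigh : i0.val ≤ 2*m - m/2 := by
      by_contra hc
      have := hZ i0.val hv0 (Or.inr (by omega))
      rw [this] at hc0; exact Bool.false_ne_true hc0
    exact ⟨⟨hlow, hc0⟩, hhigh⟩
  set M := Nat.findGreatest P' (2*m - m/2) with hMdef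
  have hMspec : P' M := Nat.findGreatest_spec hi0P.2 hi0P.1
  have hMle : M ≤ 2*m - m/2 := Nat.findGreatest_le _
  obtain ⟨hM1, hMa⟩ := hMspec
  obtain ⟨k, hk0, hk2, hka⟩ := hsucc _ hMa
  have hcast : ((M : ℕ) : ZMod (2*m)) + ((k : ℕ) : ZMod (2*m))
      = ((M + k : ℕ) : ZMod (2*m)) := by push_cast; ring
  rw [hcast] at hka
  rcases Nat.lt_or_ge (M + k) (2*m) with hlt | hge
  · rcases Nat.lt_or_ge (M + k) (2*m + 1 - m/2) with h3 | h3
    · have hbig : ¬ P' (M + k) :=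
        Nat.findGreatest_is_greatest (n := 2*m - m/2) (by omega) (by omega)
      exact hbig ⟨by omega, hka⟩
    · have := hZ (M+k) hlt (Or.inr h3)
      rw [this] at hka; exact Bool.false_ne_true hka
  · have hw : ((M + k : ℕ) : ZMod (2*m)) = ((M + k - 2*m : ℕ) : ZMod (2*m)) := by
      conv_lhs => rw [show M + k = (M + k - 2*m) + 2*m from by omega]
      rw [Nat.cast_add, ZMod.natCast_self, add_zero]
    rw [hw] at hka
    have := hZ (M + k - 2*m) (by omega) (Or.inl (by omega))
    rw [this] at hka; exact Bool.false_ne_true hka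

lemma back (hm : 2 ≤ m) {a : ZMod (2*m) → Bool} (hsym : ∀ i, a (1 - i) = a i)
    (hg : GoodFun (2*m) a) :
    ∃ j, m - m/2 ≤ j ∧ j < m ∧ a ((j + 1 : ℕ) : ZMod (2*m)) = true := by
  have hmm : ((m : ℕ) : ZMod (2*m)) + ((m : ℕ) : ZMod (2*m)) = 0 := by
    rw [← Nat.cast_add, show m + m = 2*m from by ring, ZMod.natCast_self]
  set c : ZMod (2*m) := ((m:ℕ) : ZMod (2*m)) with hc
  have hsym' : ∀ i, (fun i => a (i + c)) (1 - i) = (fun i => a (i + c)) i := by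
    intro i
    simp only
    have h1 : (1 - i) + c = 1 - (i + c) := by linear_combination hmm
    rw [h1, hsym]
  obtain ⟨j, hj, hja⟩ := front hm hsym' (good_shift c hg)
  refine ⟨m - 1 - j, by omega, by omega, ?_⟩
  rw [show m - 1 - j + 1 = m - j from by omega]
  rw [← back_mirror hm (show j < m from by omega), hsym]
  exact hja

lemma good_of (hm : 2 ≤ m) {a : ZMod (2*m) → Bool} (hsym : ∀ i, a (1 - i) = a i)
    (hf : ∃ j, j < m/2 ∧ a ((j + 1 : ℕ) : ZMod (2*m)) = true)
    (hb : ∃ j, m - m/2 ≤ j ∧ j < m ∧ a ((j + 1 : ℕ) : ZMod (2*m)) = true) :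
    GoodFun (2*m) a := by
  obtain ⟨j0, hj0, ha0⟩ := hf
  obtain ⟨j1, hj1, hj1', ha1⟩ := hb
  have hp2 : a ((2*m - j0 : ℕ) : ZMod (2*m)) = true := by
    rw [mirror_cast hm (show j0 < m from by omega), hsym]; exact ha0
  have hp4 : a ((2*m - j1 : ℕ) : ZMod (2*m)) = true := by
    rw [mirror_cast hm hj1', hsym]; exact ha1
  refine ⟨⟨_, ha0⟩, ?_⟩
  intro i _
  have hv : i.val < 2*m := val_lt' hm i
  have hi : ((i.val : ℕ) : ZMod (2*m)) = i := cast_val_self hm i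
  have key : ∀ p k : ℕ, i.val + k = p ∨ i.val + k = p + 2*m →
      a ((p : ℕ) : ZMod (2*m)) = true → a (i + ((k:ℕ) : ZMod (2*m))) = true := by
    intro p k hpk hp
    have h1 : i + ((k:ℕ) : ZMod (2*m)) = ((i.val + k : ℕ) : ZMod (2*m)) := by
      rw [Nat.cast_add, hi]
    rw [h1]
    rcases hpk with h | h
    · rw [h]; exact hp
    · rw [h, Nat.cast_add, ZMod.natCast_self, add_zero]; exact hp
  rcases Nat.lt_or_ge i.val (j0 + 1) with h | h
  · exact ⟨j0 + 1 - i.val, by omega, by omega, key _ _ (Or.inl (by omega)) ha0⟩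
  rcases Nat.lt_or_ge i.val (j1 + 1) with h2 | h2
  · exact ⟨j1 + 1 - i.val, by omega, by omega, key _ _ (Or.inl (by omega)) ha1⟩
  rcases Nat.lt_or_ge i.val (2*m - j1) with h3 | h3
  · exact ⟨2*m - j1 - i.val, by omega, by omega, key _ _ (Or.inl (by omega)) hp4⟩
  rcases Nat.lt_or_ge i.val (2*m - j0) with h4 | h4
  · exact ⟨2*m - j0 - i.val, by omega, by omega, key _ _ (Or.inl (by omega)) hp2⟩
  · exact ⟨j0 + 1 + 2*m - i.val, by omega, by omega, key _ _ (Or.inr (by omega)) ha0⟩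

lemma set_eq (hm : 2 ≤ m) :
    {a : ZMod (2*m) → Bool | GoodFun (2*m) a ∧ ∀ i, a (1 - i) = a i}
      = Phi m '' ↑(F m) := by
  ext a
  simp only [Set.mem_setOf_eq, Set.mem_image, Finset.mem_coe]
  constructor
  · rintro ⟨hg, hsym⟩
    refine ⟨(Finset.range m).filter (fun j => a ((j + 1 : ℕ) : ZMod (2*m)) = true), ?_, ?_⟩
    · unfold F
      refine Finset.mem_filter.mpr
        ⟨Finset.mem_powerset.mpr (Finset.filter_subset _ _), ?_, ?_⟩
      · obtain ⟨j, hj, hja⟩ := front hm hsym hg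
        exact ⟨j, Finset.mem_filter.mpr ⟨Finset.mem_range.mpr (by omega), hja⟩, hj⟩
      · obtain ⟨j, hj, hj', hja⟩ := back hm hsym hg
        exact ⟨j, Finset.mem_filter.mpr ⟨Finset.mem_range.mpr hj', hja⟩, hj⟩
    · funext i
      cases h : a i
      · simp only [Phi, decide_eq_false_iff_not, Finset.mem_filter, Finset.mem_range]
        rintro ⟨-, hfa⟩
        rw [← apply_rep hm a hsym i, h] at hfa
        exact Bool.false_ne_true hfa
      · simp only [Phi, decide_eq_true_eq, Finset.mem_filter, Finset.mem_range]
        exact ⟨fval_lt hm i, by rw [← apply_rep hm a hsym i]; exact h⟩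
  · rintro ⟨S, hS, rfl⟩
    simp only [F, Finset.mem_filter, Finset.mem_powerset] at hS
    obtain ⟨hsub, ⟨j0, hj0S, hj0⟩, ⟨j1, hj1S, hj1⟩⟩ := hS
    have hj0m : j0 < m := Finset.mem_range.mp (hsub hj0S)
    have hj1m : j1 < m := Finset.mem_range.mp (hsub hj1S)
    have hsym : ∀ i, Phi m S (1 - i) = Phi m S i := Phi_sym hm S
    refine ⟨?_, hsym⟩
    apply good_of hm hsym
    · exact ⟨j0, hj0, by rw [Phi_cast_succ hm S hj0m]; simpa using hj0S⟩
    · exact ⟨j1, hj1, hj1m, by rw [Phi_cast_succ hm S hj1m]; simpa using hj1S⟩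

lemma phi_injOn (hm : 2 ≤ m) : Set.InjOn (Phi m) ↑(F m) := by
  intro S hS T hT h
  have hS' : S ⊆ Finset.range m :=
    Finset.mem_powerset.mp (Finset.mem_filter.mp (Finset.mem_coe.mp hS)).1
  have hT' : T ⊆ Finset.range m :=
    Finset.mem_powerset.mp (Finset.mem_filter.mp (Finset.mem_coe.mp hT)).1
  ext j
  by_cases hj : j < m
  · have h2 := congrFun h ((j + 1 : ℕ) : ZMod (2*m))
    rw [Phi_cast_succ hm S hj, Phi_cast_succ hm T hj, decide_eq_decide] at h2
    exact h2
  · constructor <;> intro hmem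
    · exact ((hj (Finset.mem_range.mp (hS' hmem)))).elim
    · exact ((hj (Finset.mem_range.mp (hT' hmem)))).elim

lemma card_F (hm : 2 ≤ m) :
    (F m).card + 2^(m - m/2) + 2^(m - m/2) = 2^m + 2^(m - 2*(m/2)) := by
  classical
  have h1 := Finset.card_filter_add_card_filter_not
    (s := (Finset.range m).powerset)
    (p := fun S => (∃ j ∈ S, j < m/2) ∧ (∃ j ∈ S, m - m/2 ≤ j))
  have hXY : (Finset.range m).powerset.filter
      (fun S => ¬((∃ j ∈ S, j < m/2) ∧ (∃ j ∈ S, m - m/2 ≤ j)))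
      = (Finset.Ico (m/2) m).powerset ∪ (Finset.range (m - m/2)).powerset := by
    ext S
    simp only [Finset.mem_filter, Finset.mem_powerset, Finset.mem_union]
    constructor
    · rintro ⟨hsub, hnot⟩
      by_cases hA : ∃ j ∈ S, j < m/2
      · right
        intro x hx
        rw [Finset.mem_range]
        by_contra hc
        exact hnot ⟨hA, ⟨x, hx, by omega⟩⟩
      · left
        intro x hx
        push_neg at hA
        have h1 := hA x hx
        have h2 := Finset.mem_range.mp (hsub hx)
        rw [Finset.mem_Ico]; omega
    · rintro (h | h)
      · refine ⟨fun x hx => ?_, ?_⟩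
        · have := Finset.mem_Ico.mp (h hx); rw [Finset.mem_range]; omega
        · rintro ⟨⟨j, hjS, hj⟩, -⟩
          have := Finset.mem_Ico.mp (h hjS); omega
      · refine ⟨fun x hx => ?_, ?_⟩
        · have := Finset.mem_range.mp (h hx); rw [Finset.mem_range]; omega
        · rintro ⟨-, ⟨j, hjS, hj⟩⟩
          have := Finset.mem_range.mp (h hjS); omega
  have hAB : Finset.Ico (m/2) m ∩ Finset.range (m - m/2) = Finset.Ico (m/2) (m - m/2) := by
    rw [Finset.range_eq_Ico, Finset.Ico_inter_Ico]
    congr 1 <;> omega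
  have hpow : (Finset.Ico (m/2) m).powerset ∩ (Finset.range (m - m/2)).powerset
      = (Finset.Ico (m/2) (m - m/2)).powerset := by
    ext S
    simp only [Finset.mem_inter, Finset.mem_powerset, ← Finset.subset_inter_iff, hAB]
  have hF : F m = (Finset.range m).powerset.filter
      (fun S => (∃ j ∈ S, j < m/2) ∧ (∃ j ∈ S, m - m/2 ≤ j)) := rfl
  rw [hXY] at h1
  have hcardU := Finset.card_union_add_card_inter
    (Finset.Ico (m/2) m).powerset (Finset.range (m - m/2)).powerset
  rw [hpow] at hcardU
  rw [Finset.card_powerset, Finset.card_powerset, Finset.card_powerset,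
    Nat.card_Ico, Finset.card_range, Nat.card_Ico] at hcardU
  rw [Finset.card_powerset, Finset.card_range, ← hF] at h1
  rw [show m - m/2 - m/2 = m - 2*(m/2) from by omega] at hcardU
  set A := ((Finset.Ico (m/2) m).powerset ∪ (Finset.range (m - m/2)).powerset).card with hA
  set B := (2:ℕ)^(m - m/2) with hB
  set C := (2:ℕ)^m with hC
  set D := (2:ℕ)^(m - 2*(m/2)) with hD
  omega

lemma main (m : ℕ) (hm : 2 ≤ m) :
    ({a : ZMod (2*m) → Bool | GoodFun (2*m) a ∧ ∀ i, a (1 - i) = a i}.ncard : ℤ)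
      = 2^m + 2^(m - 2*(m/2)) - 2^(m - m/2) - 2^(m - m/2) := by
  rw [set_eq hm, Set.ncard_image_of_injOn (phi_injOn hm), Set.ncard_coe_finset]
  have h := card_F (m := m) hm
  have h2 := congrArg (Nat.cast : ℕ → ℤ) h
  push_cast at h2
  linarith

end FixGoodAux

/-- For even `n ≥ 4`, the number of good binary `n`-tuples fixed by the fixed-point-free
reflection `x ↦ n + 1 - x = 1 - x (mod n)`. -/
theorem fix_good_reflection_free (n : ℕ) (hn : 4 ≤ n) (heven : Even n) :
    ({a : ZMod n → Bool | GoodFun n a ∧ ∀ i, a (1 - i) = a i}.ncard : ℤ)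
      = if n % 4 = 0 then 2 ^ (n / 2) - 2 ^ ((n + 4) / 4) + 1
        else 2 ^ (n / 2) - 2 ^ ((n + 6) / 4) + 2 := by
  have hpar : n % 2 = 0 := Nat.even_iff.mp heven
  obtain ⟨m, rfl⟩ : ∃ m, n = 2 * m := ⟨n / 2, by omega⟩
  have hm : 2 ≤ m := by omega
  rw [FixGoodAux.main m hm]
  rcases Nat.mod_two_eq_zero_or_one m with he | he
  · rw [if_pos (show 2*m % 4 = 0 from by omega)]
    rw [show 2*m/2 = m from by omega, show (2*m+4)/4 = m/2 + 1 from by omega,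
      show m - 2*(m/2) = 0 from by omega, show m - m/2 = m/2 from by omega,
      ]
    ring
  · rw [if_neg (show ¬ 2*m % 4 = 0 from by omega)]
    rw [show 2*m/2 = m from by omega, show (2*m+6)/4 = m/2 + 2 from by omega,
      show m - 2*(m/2) = 1 from by omega, show m - m/2 = m/2 + 1 from by omega,
      ]
    ring
end

section
/- Let n≥4 be even and let σ be the reflection x ↦ n+2-x (mod n), fixing the two points 1 and n/2+1. The number of good binary n-tuples fixed by σ equals 2^{(n+2)/2} - 2^{(n+8)/4} + 1 if n≡0 (mod 4), and 2^{(n+2)/2} - 2^{(n+6)/4} if n≡2 (mod 4). -/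
namespace FixGoodReflAux

/-- The "folded index" of `1 + t` on the circle `ZMod n`. -/
def fidx (n t : ℕ) : ℕ := min (t % n) (n - t % n)

lemma fidx_lt {n m : ℕ} (hn : n = 2 * m) (hm : 0 < m) (t : ℕ) : fidx n t < m + 1 := by
  have h : t % n < n := Nat.mod_lt _ (by omega)
  unfold fidx; omega

lemma fidx_mod {n : ℕ} (t : ℕ) : fidx n (t % n) = fidx n t := by
  unfold fidx; rw [Nat.mod_mod_of_dvd _ dvd_rfl]

lemma fidx_small {n m : ℕ} (hn : n = 2 * m) {t : ℕ} (ht : t < 2 * m) :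
    fidx n t = min t (2 * m - t) := by
  subst hn; unfold fidx; rw [Nat.mod_eq_of_lt ht]

lemma fidx_big {n m : ℕ} (hn : n = 2 * m) (hm : 0 < m) {t : ℕ} (h1 : 2 * m ≤ t)
    (h2 : t < 4 * m) : fidx n t = min (t - 2 * m) (2 * m - (t - 2 * m)) := by
  subst hn; unfold fidx
  rw [Nat.mod_eq_sub_mod h1, Nat.mod_eq_of_lt (by omega)]

/-- The symmetric function on `ZMod n` determined by its values `c` on `1, 2, ..., 1 + m`. -/
def Phi (n m : ℕ) (c : Fin (m + 1) → Bool) : ZMod n → Bool :=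
  fun i => c ⟨fidx n (ZMod.val (i - 1)) % (m + 1), Nat.mod_lt _ (Nat.succ_pos m)⟩

lemma Phi_eval {n m : ℕ} (hn : n = 2 * m) (hm : 0 < m) (c : Fin (m + 1) → Bool) (t : ℕ) :
    Phi n m c (1 + (t : ZMod n)) = c ⟨fidx n t, fidx_lt hn hm t⟩ := by
  haveI : NeZero n := ⟨by omega⟩
  have h1 : (1 + (t : ZMod n)) - 1 = (t : ZMod n) := by ring
  rw [Phi]
  congr 1
  apply Fin.ext
  show fidx n ((1 + (t : ZMod n) - 1)).val % (m + 1) = fidx n t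
  rw [h1, ZMod.val_natCast, fidx_mod]
  exact Nat.mod_eq_of_lt (fidx_lt hn hm t)

lemma fidx_neg {n m : ℕ} (hn : n = 2 * m) (hm : 0 < m) {v : ℕ} (hv : v < n) :
    fidx n (n - v) = fidx n v := by
  unfold fidx
  rcases Nat.eq_zero_or_pos v with h | h
  · subst h; simp
  · rw [Nat.mod_eq_of_lt (by omega), Nat.mod_eq_of_lt hv]; omega

lemma Phi_symm {n m : ℕ} (hn : n = 2 * m) (hm : 0 < m) (c : Fin (m + 1) → Bool) (i : ZMod n) :
    Phi n m c (2 - i) = Phi n m c i := by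
  haveI : NeZero n := ⟨by omega⟩
  have h1 : (2 - i) - 1 = -(i - 1) := by ring
  have key : fidx n ((n - (i - 1).val) % n) = fidx n ((i - 1).val) := by
    rw [fidx_mod]; exact fidx_neg hn hm (ZMod.val_lt _)
  rw [Phi, Phi]
  congr 1
  apply Fin.ext
  show fidx n ((2 - i - 1)).val % (m + 1) = fidx n ((i - 1)).val % (m + 1)
  rw [h1, ZMod.neg_val', key]

lemma Phi_surj {n m : ℕ} (hn : n = 2 * m) (hm : 0 < m) {a : ZMod n → Bool}
    (ha : ∀ i, a (2 - i) = a i) :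
    Phi n m (fun j => a (1 + ((j : ℕ) : ZMod n))) = a := by
  haveI : NeZero n := ⟨by omega⟩
  funext i
  have hvlt : (i - 1).val < n := ZMod.val_lt _
  have hiv : (((i - 1).val : ℕ) : ZMod n) = i - 1 := ZMod.natCast_zmod_val _
  rw [Phi]
  simp only []
  set v := (i - 1).val with hv
  have hfe : fidx n v % (m + 1) = fidx n v := Nat.mod_eq_of_lt (fidx_lt hn hm v)
  rcases le_or_gt (2 * v) n with hle | hgt
  · have h2 : fidx n v = v := by
      unfold fidx; rw [Nat.mod_eq_of_lt hvlt]; omega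
    have h5 : fidx n v % (m + 1) = v := by
      rw [h2]; exact Nat.mod_eq_of_lt (by omega)
    simp only [h5]
    rw [hiv]
    congr 1; ring
  · have h2 : fidx n v = n - v := by
      unfold fidx; rw [Nat.mod_eq_of_lt hvlt]; omega
    have h5 : fidx n v % (m + 1) = n - v := by
      rw [h2]; exact Nat.mod_eq_of_lt (by omega)
    simp only [h5]
    have h3 : ((n - v : ℕ) : ZMod n) = -(i - 1) := by
      rw [Nat.cast_sub (le_of_lt hvlt), ZMod.natCast_self, hiv]; ring
    rw [h3]
    have h4 : 1 + -(i - 1) = 2 - i := by ring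
    rw [h4, ha]

lemma Phi_inj {n m : ℕ} (hn : n = 2 * m) (hm : 0 < m) : Function.Injective (Phi n m) := by
  intro c₁ c₂ h
  funext j
  have h1 := congrFun h (1 + ((j : ℕ) : ZMod n))
  rw [Phi_eval hn hm, Phi_eval hn hm] at h1
  have hj : (j : ℕ) < m + 1 := j.isLt
  have h2 : fidx n (j : ℕ) = (j : ℕ) := by
    unfold fidx; rw [Nat.mod_eq_of_lt (by omega)]; omega
  have h3 : (⟨fidx n (j : ℕ), fidx_lt hn hm _⟩ : Fin (m + 1)) = j := Fin.ext h2
  rwa [h3] at h1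

/-- The "bad" symmetric configurations, in folded coordinates. -/
def BadC (m : ℕ) (c : Fin (m + 1) → Bool) : Prop :=
  (∀ j : Fin (m + 1), m / 2 < (j : ℕ) → c j = false) ∨
  (∀ j : Fin (m + 1), (j : ℕ) < (m + 1) / 2 → c j = false) ∨
  (∀ j : Fin (m + 1), (j : ℕ) ≠ 0 → (j : ℕ) ≠ m → c j = false)

lemma notGood_iff {n m : ℕ} (hn : n = 2 * m) (hm : 2 ≤ m) (c : Fin (m + 1) → Bool) :
    ¬ GoodFun n (Phi n m c) ↔ BadC m c := by
  classical
  haveI : NeZero n := ⟨by omega⟩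
  have hm0 : 0 < m := by omega
  constructor
  · intro hng
    rw [GoodFun] at hng
    push_neg at hng
    by_cases hex : ∃ i, Phi n m c i = true
    · obtain ⟨i, hi, hzero⟩ := hng hex
      set t := (i - 1).val with htdef
      have htl : t < 2 * m := by rw [← hn]; exact ZMod.val_lt _
      have hit : i = 1 + ((t : ℕ) : ZMod n) := by
        rw [ZMod.natCast_zmod_val]; ring
      have hct' : c ⟨fidx n t, fidx_lt hn hm0 t⟩ = true := by
        have hPt := Phi_eval hn hm0 c t
        rw [← hit] at hPt
        rw [hPt] at hi; exact hi
      have hz : ∀ (k : ℕ) (u : Fin (m + 1)), 0 < k → 2 * k < n →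
          fidx n (t + k) = (u : ℕ) → c u = false := by
        intro k u hk1 hk2 hfu
        have h0 := hzero k hk1 hk2
        rw [hit] at h0
        have hcast : (1 + ((t : ℕ) : ZMod n)) + (k : ZMod n)
            = 1 + (((t + k : ℕ)) : ZMod n) := by push_cast; ring
        rw [hcast, Phi_eval hn hm0] at h0
        have he : (⟨fidx n (t + k), fidx_lt hn hm0 _⟩ : Fin (m + 1)) = u := Fin.ext hfu
        rw [he] at h0
        simpa using h0
      rcases le_or_gt t m with htm | htm
      · -- the witness is at position 1 + t with t ≤ m
        have htlt : t < m + 1 := by omega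
        have hctt : c ⟨t, htlt⟩ = true := by
          have hf : fidx n t = t := by rw [fidx_small hn (by omega)]; omega
          have he : (⟨fidx n t, fidx_lt hn hm0 t⟩ : Fin (m + 1)) = ⟨t, htlt⟩ := Fin.ext hf
          rw [he] at hct'; exact hct'
        by_cases ht0 : t = 0
        · refine Or.inr (Or.inr ?_)
          intro u hu0 hum
          have hu := u.isLt
          apply hz (u : ℕ) u (by omega) (by omega)
          rw [fidx_small hn (by omega)]; omega
        · by_cases h2t : 2 * t ≤ m
          · refine Or.inl ?_
            intro u hu
            have hult := u.isLt
            apply hz ((u : ℕ) - t) u (by omega) (by omega)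
            have harg : t + ((u : ℕ) - t) = (u : ℕ) := by omega
            rw [harg, fidx_small hn (by omega)]; omega
          · by_cases htm' : t = m
            · refine Or.inr (Or.inr ?_)
              intro u hu0 hum
              have hu := u.isLt
              apply hz (m - (u : ℕ)) u (by omega) (by omega)
              have harg : t + (m - (u : ℕ)) = 2 * m - (u : ℕ) := by omega
              rw [harg, fidx_small hn (by omega)]; omega
            · exfalso
              have harg2 : fidx n (t + 2 * (m - t)) = t := by
                have harg : t + 2 * (m - t) = 2 * m - t := by omega
                rw [harg, fidx_small hn (by omega)]; omega
              have hres := hz (2 * (m - t)) ⟨t, htlt⟩ (by omega) (by omega) harg2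
              rw [hctt] at hres; exact absurd hres (by simp)
      · -- the witness is at position 1 + t with t > m; fold to j = 2m - t
        set j := 2 * m - t with hjdef
        have hj1 : 1 ≤ j := by omega
        have hj2 : j ≤ m - 1 := by omega
        have hjlt : j < m + 1 := by omega
        have hctj : c ⟨j, hjlt⟩ = true := by
          have hf : fidx n t = j := by rw [fidx_small hn (by omega)]; omega
          have he : (⟨fidx n t, fidx_lt hn hm0 t⟩ : Fin (m + 1)) = ⟨j, hjlt⟩ := Fin.ext hf
          rw [he] at hct'; exact hct'
        by_cases h2j : m ≤ 2 * j
        · refine Or.inr (Or.inl ?_)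
          intro u hu
          have huj : (u : ℕ) < j := by omega
          apply hz (j - (u : ℕ)) u (by omega) (by omega)
          rcases Nat.eq_zero_or_pos (u : ℕ) with hu0 | hu0
          · have harg : t + (j - (u : ℕ)) = 2 * m := by omega
            rw [harg, fidx_big hn hm0 (by omega) (by omega)]; omega
          · have harg : t + (j - (u : ℕ)) = 2 * m - (u : ℕ) := by omega
            rw [harg, fidx_small hn (by omega)]; omega
        · exfalso
          have harg2 : fidx n (t + 2 * j) = j := by
            have harg : t + 2 * j = 2 * m + j := by omega
            rw [harg, fidx_big hn hm0 (by omega) (by omega)]; omega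
          have hres := hz (2 * j) ⟨j, hjlt⟩ (by omega) (by omega) harg2
          rw [hctj] at hres; exact absurd hres (by simp)
    · -- no true entry at all: vacuously bad
      push_neg at hex
      refine Or.inl ?_
      intro u _
      have h0 := hex (1 + ((u : ℕ) : ZMod n))
      rw [Phi_eval hn hm0] at h0
      have hu := u.isLt
      have hf : fidx n (u : ℕ) = (u : ℕ) := by rw [fidx_small hn (by omega)]; omega
      have he : (⟨fidx n (u : ℕ), fidx_lt hn hm0 _⟩ : Fin (m + 1)) = u := Fin.ext hf
      rw [he] at h0
      simpa using h0
  · intro hbad hg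
    obtain ⟨⟨i0, hi0⟩, hall⟩ := hg
    set t0 := (i0 - 1).val with ht0def
    have hit0 : i0 = 1 + ((t0 : ℕ) : ZMod n) := by rw [ZMod.natCast_zmod_val]; ring
    have hct0 : c ⟨fidx n t0, fidx_lt hn hm0 t0⟩ = true := by
      have hPt := Phi_eval hn hm0 c t0
      rw [← hit0] at hPt
      rw [hPt] at hi0; exact hi0
    have key : ∀ s : ℕ, Phi n m c (1 + (s : ZMod n)) = true →
        ∃ k, 0 < k ∧ 2 * k < n ∧ c ⟨fidx n (s + k), fidx_lt hn hm0 _⟩ = true := by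
      intro s hs
      obtain ⟨k, hk1, hk2, hk3⟩ := hall _ hs
      refine ⟨k, hk1, hk2, ?_⟩
      have hcast : (1 + ((s : ℕ) : ZMod n)) + (k : ZMod n)
          = 1 + (((s + k : ℕ)) : ZMod n) := by push_cast; ring
      rw [hcast, Phi_eval hn hm0] at hk3; exact hk3
    rcases hbad with hA | hB | hC
    · -- support bounded above by m/2 : take the largest true index
      set supp : Finset (Fin (m + 1)) := Finset.univ.filter (fun u => c u = true) with hsupp
      have hne : supp.Nonempty :=
        ⟨⟨fidx n t0, fidx_lt hn hm0 t0⟩, by simp [hsupp, hct0]⟩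
      set j := supp.max' hne with hjdef
      have hcj : c j = true := by
        have := supp.max'_mem hne; simpa [hsupp] using this
      have hmax : ∀ u : Fin (m + 1), c u = true → (u : ℕ) ≤ (j : ℕ) := by
        intro u hu
        have : u ≤ j := supp.le_max' u (by simp [hsupp, hu])
        exact this
      have hjm : (j : ℕ) ≤ m / 2 := by
        by_contra hcon
        have := hA j (by omega)
        rw [this] at hcj; exact absurd hcj (by simp)
      have hjlt := j.isLt
      have hsj : Phi n m c (1 + ((j : ℕ) : ZMod n)) = true := by
        rw [Phi_eval hn hm0]
        have hf : fidx n (j : ℕ) = (j : ℕ) := by rw [fidx_small hn (by omega)]; omega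
        have he : (⟨fidx n (j : ℕ), fidx_lt hn hm0 _⟩ : Fin (m + 1)) = j := Fin.ext hf
        rw [he]; exact hcj
      obtain ⟨k, hk1, hk2, hk3⟩ := key _ hsj
      have hgt : (j : ℕ) < fidx n ((j : ℕ) + k) := by
        rw [fidx_small hn (by omega)]; omega
      have hle : fidx n ((j : ℕ) + k) ≤ (j : ℕ) := hmax _ hk3
      omega
    · -- support bounded below by (m+1)/2 : take the smallest true index
      set supp : Finset (Fin (m + 1)) := Finset.univ.filter (fun u => c u = true) with hsupp
      have hne : supp.Nonempty :=
        ⟨⟨fidx n t0, fidx_lt hn hm0 t0⟩, by simp [hsupp, hct0]⟩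
      set j := supp.min' hne with hjdef
      have hcj : c j = true := by
        have := supp.min'_mem hne; simpa [hsupp] using this
      have hmin : ∀ u : Fin (m + 1), c u = true → (j : ℕ) ≤ (u : ℕ) := by
        intro u hu
        have : j ≤ u := supp.min'_le u (by simp [hsupp, hu])
        exact this
      have hjm : (m + 1) / 2 ≤ (j : ℕ) := by
        by_contra hcon
        have := hB j (by omega)
        rw [this] at hcj; exact absurd hcj (by simp)
      have hjlt := j.isLt
      have hsj : Phi n m c (1 + ((2 * m - (j : ℕ) : ℕ) : ZMod n)) = true := by
        rw [Phi_eval hn hm0]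
        have hf : fidx n (2 * m - (j : ℕ)) = (j : ℕ) := by
          rw [fidx_small hn (by omega)]; omega
        have he : (⟨fidx n (2 * m - (j : ℕ)), fidx_lt hn hm0 _⟩ : Fin (m + 1)) = j :=
          Fin.ext hf
        rw [he]; exact hcj
      obtain ⟨k, hk1, hk2, hk3⟩ := key _ hsj
      have hlt : fidx n (2 * m - (j : ℕ) + k) < (j : ℕ) := by
        rcases lt_or_ge k (j : ℕ) with hkj | hkj
        · have harg : 2 * m - (j : ℕ) + k = 2 * m - ((j : ℕ) - k) := by omega
          rw [harg, fidx_small hn (by omega)]; omega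
        · have harg : 2 * m - (j : ℕ) + k = 2 * m + (k - (j : ℕ)) := by omega
          rw [harg, fidx_big hn hm0 (by omega) (by omega)]; omega
      have hge : (j : ℕ) ≤ fidx n (2 * m - (j : ℕ) + k) := hmin _ hk3
      omega
    · -- support contained in {0, m}
      have h0m : 0 < m + 1 := by omega
      have hmm : m < m + 1 := by omega
      by_cases hcm : c ⟨m, hmm⟩ = true
      · have hsj : Phi n m c (1 + ((m : ℕ) : ZMod n)) = true := by
          rw [Phi_eval hn hm0]
          have hf : fidx n m = m := by rw [fidx_small hn (by omega)]; omega
          have he : (⟨fidx n m, fidx_lt hn hm0 _⟩ : Fin (m + 1)) = ⟨m, hmm⟩ := Fin.ext hf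
          rw [he]; exact hcm
        obtain ⟨k, hk1, hk2, hk3⟩ := key _ hsj
        have hf : fidx n (m + k) = m - k := by rw [fidx_small hn (by omega)]; omega
        have := hC ⟨fidx n (m + k), fidx_lt hn hm0 _⟩
          (by show fidx n (m + k) ≠ 0; omega) (by show fidx n (m + k) ≠ m; omega)
        rw [this] at hk3; exact absurd hk3 (by simp)
      · by_cases hc0 : c ⟨0, h0m⟩ = true
        · have hsj : Phi n m c (1 + ((0 : ℕ) : ZMod n)) = true := by
            rw [Phi_eval hn hm0]
            have hf : fidx n 0 = 0 := by rw [fidx_small hn (by omega)]; omega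
            have he : (⟨fidx n 0, fidx_lt hn hm0 _⟩ : Fin (m + 1)) = ⟨0, h0m⟩ := Fin.ext hf
            rw [he]; exact hc0
          obtain ⟨k, hk1, hk2, hk3⟩ := key _ hsj
          have hf : fidx n (0 + k) = k := by rw [fidx_small hn (by omega)]; omega
          have := hC ⟨fidx n (0 + k), fidx_lt hn hm0 _⟩
            (by show fidx n (0 + k) ≠ 0; omega) (by show fidx n (0 + k) ≠ m; omega)
          rw [this] at hk3; exact absurd hk3 (by simp)
        · -- c is identically false, contradicting hct0
          set w : Fin (m + 1) := ⟨fidx n t0, fidx_lt hn hm0 t0⟩ with hw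
          have hcw : c w = false := by
            by_cases hw0 : (w : ℕ) = 0
            · have : w = ⟨0, h0m⟩ := Fin.ext hw0
              rw [this]; exact Bool.not_eq_true _ ▸ (by simpa using hc0)
            · by_cases hwm : (w : ℕ) = m
              · have : w = ⟨m, hmm⟩ := Fin.ext hwm
                rw [this]; exact Bool.not_eq_true _ ▸ (by simpa using hcm)
              · exact hC w hw0 hwm
          rw [hct0] at hcw; exact absurd hcw (by simp)

/-- Configurations supported inside a given finset of folded indices. -/
def Supp {N : ℕ} (s : Finset (Fin N)) : Set (Fin N → Bool) :=
  {c | ∀ j, j ∉ s → c j = false}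

lemma count_supp {N : ℕ} (s : Finset (Fin N)) : (Supp s).ncard = 2 ^ s.card := by
  classical
  have e : (Supp s) ≃ ({j // j ∈ s} → Bool) :=
  { toFun := fun c j => c.1 j.1
    invFun := fun d => ⟨fun j => if h : j ∈ s then d ⟨j, h⟩ else false,
      fun j hj => dif_neg hj⟩
    left_inv := by
      rintro ⟨c, hc⟩
      apply Subtype.ext
      funext j
      by_cases h : j ∈ s
      · simp [h]
      · have hcf : ∀ j ∉ s, c j = false := hc
        simp [h, hcf j h]
    right_inv := by
      intro d; funext j; simp [j.2] }
  rw [← Nat.card_coe_set_eq, Nat.card_congr e, Nat.card_eq_fintype_card,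
    Fintype.card_fun, Fintype.card_coe, Fintype.card_bool]

lemma supp_inter {N : ℕ} (s t : Finset (Fin N)) : Supp s ∩ Supp t = Supp (s ∩ t) := by
  ext c
  simp only [Supp, Set.mem_inter_iff, Set.mem_setOf_eq, Finset.mem_inter, not_and]
  constructor
  · rintro ⟨h1, h2⟩ j hj
    by_cases hs : j ∈ s
    · exact h2 j (hj hs)
    · exact h1 j hs
  · intro h
    refine ⟨fun j hj => h j (fun hs => absurd hs hj), fun j hj => h j (fun _ => hj)⟩

/-- The folded-index intervals describing the three families of bad configurations. -/
def IA (m : ℕ) : Finset (Fin (m + 1)) := Finset.Iic ⟨m / 2, by omega⟩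
def IB (m : ℕ) : Finset (Fin (m + 1)) := Finset.Ici ⟨(m + 1) / 2, by omega⟩
def IC (m : ℕ) : Finset (Fin (m + 1)) := {⟨0, by omega⟩, ⟨m, by omega⟩}

lemma badset_eq (m : ℕ) :
    {c : Fin (m + 1) → Bool | BadC m c} = Supp (IA m) ∪ (Supp (IB m) ∪ Supp (IC m)) := by
  have hAmem : ∀ j : Fin (m + 1), j ∉ IA m ↔ m / 2 < (j : ℕ) := by
    intro j; simp [IA, Finset.mem_Iic, Fin.le_def, not_le]
  have hBmem : ∀ j : Fin (m + 1), j ∉ IB m ↔ (j : ℕ) < (m + 1) / 2 := by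
    intro j; simp [IB, Finset.mem_Ici, Fin.le_def, not_le]
  have hCmem : ∀ j : Fin (m + 1), j ∉ IC m ↔ (j : ℕ) ≠ 0 ∧ (j : ℕ) ≠ m := by
    intro j; simp only [IC, Finset.mem_insert, Finset.mem_singleton, Fin.ext_iff, not_or, ne_eq]
  ext c
  simp only [Set.mem_setOf_eq, Set.mem_union, BadC, Supp]
  constructor
  · rintro (h | h | h)
    · exact Or.inl (fun j hj => h j ((hAmem j).mp hj))
    · exact Or.inr (Or.inl (fun j hj => h j ((hBmem j).mp hj)))
    · exact Or.inr (Or.inr (fun j hj => h j ((hCmem j).mp hj).1 ((hCmem j).mp hj).2))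
  · rintro (h | h | h)
    · exact Or.inl (fun j hj => h j ((hAmem j).mpr hj))
    · exact Or.inr (Or.inl (fun j hj => h j ((hBmem j).mpr hj)))
    · exact Or.inr (Or.inr (fun j h1 h2 => h j ((hCmem j).mpr ⟨h1, h2⟩)))

lemma badC_ncard (m : ℕ) (hm : 2 ≤ m) :
    {c : Fin (m + 1) → Bool | BadC m c}.ncard + (1 - m % 2)
      = 2 ^ (m / 2 + 1) + 2 ^ (m / 2 + 1) := by
  classical
  -- cards of the index finsets
  have hcA : (IA m).card = m / 2 + 1 := by rw [IA, Fin.card_Iic]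
  have hcB : (IB m).card = m / 2 + 1 := by
    rw [IB, Fin.card_Ici]; show m + 1 - (m + 1) / 2 = m / 2 + 1; omega
  have hcC : (IC m).card = 2 := by
    have h0m : (⟨0, by omega⟩ : Fin (m + 1)) ∉ ({⟨m, by omega⟩} : Finset (Fin (m + 1))) := by
      intro h
      rw [Finset.mem_singleton] at h
      have := Fin.ext_iff.mp h
      simp only [] at this
      omega
    rw [IC, Finset.card_insert_of_notMem h0m, Finset.card_singleton]
  have hcAB : (IA m ∩ IB m).card = m / 2 + 1 - (m + 1) / 2 := by
    have : IA m ∩ IB m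
        = Finset.Icc (⟨(m + 1) / 2, by omega⟩ : Fin (m + 1)) ⟨m / 2, by omega⟩ := by
      ext j
      simp [IA, IB, Finset.mem_inter, Finset.mem_Icc, Finset.mem_Iic, Finset.mem_Ici,
        Fin.le_def, and_comm]
    rw [this, Fin.card_Icc]
  have hcAC : (IA m ∩ IC m).card = 1 := by
    have : IA m ∩ IC m = {⟨0, by omega⟩} := by
      ext j
      simp only [IA, IC, Finset.mem_inter, Finset.mem_Iic, Finset.mem_insert,
        Finset.mem_singleton, Fin.le_def, Fin.ext_iff]
      omega
    rw [this, Finset.card_singleton]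
  have hcBC : (IB m ∩ IC m).card = 1 := by
    have : IB m ∩ IC m = {⟨m, by omega⟩} := by
      ext j
      simp only [IB, IC, Finset.mem_inter, Finset.mem_Ici, Finset.mem_insert,
        Finset.mem_singleton, Fin.le_def, Fin.ext_iff]
      omega
    rw [this, Finset.card_singleton]
  have hcABAC : ((IA m ∩ IB m) ∩ (IA m ∩ IC m)).card = 0 := by
    have : (IA m ∩ IB m) ∩ (IA m ∩ IC m) = (∅ : Finset (Fin (m + 1))) := by
      ext j
      simp only [IA, IB, IC, Finset.mem_inter, Finset.mem_Iic, Finset.mem_Ici,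
        Finset.mem_insert, Finset.mem_singleton, Finset.notMem_empty, Fin.le_def,
        Fin.ext_iff, iff_false, not_and, and_imp]
      omega
    rw [this, Finset.card_empty]
  -- inclusion–exclusion
  have eBC : (Supp (IB m) ∪ Supp (IC m)).ncard + (Supp (IB m) ∩ Supp (IC m)).ncard
      = (Supp (IB m)).ncard + (Supp (IC m)).ncard :=
    Set.ncard_union_add_ncard_inter _ _ (Set.toFinite _) (Set.toFinite _)
  have eU : ({c : Fin (m + 1) → Bool | BadC m c}).ncard
        + (Supp (IA m) ∩ (Supp (IB m) ∪ Supp (IC m))).ncard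
      = (Supp (IA m)).ncard + (Supp (IB m) ∪ Supp (IC m)).ncard := by
    rw [badset_eq m]
    exact Set.ncard_union_add_ncard_inter _ _ (Set.toFinite _) (Set.toFinite _)
  have hdist : Supp (IA m) ∩ (Supp (IB m) ∪ Supp (IC m))
      = (Supp (IA m) ∩ Supp (IB m)) ∪ (Supp (IA m) ∩ Supp (IC m)) :=
    Set.inter_union_distrib_left _ _ _
  have eD : (Supp (IA m ∩ IB m) ∪ Supp (IA m ∩ IC m)).ncard
        + (Supp (IA m ∩ IB m) ∩ Supp (IA m ∩ IC m)).ncard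
      = (Supp (IA m ∩ IB m)).ncard + (Supp (IA m ∩ IC m)).ncard :=
    Set.ncard_union_add_ncard_inter _ _ (Set.toFinite _) (Set.toFinite _)
  -- rewrite all intersections as Supp of finset intersections and compute
  simp only [supp_inter] at eBC eD hdist
  rw [hdist] at eU
  simp only [count_supp] at eBC eU eD
  rw [hcB, hcC, hcBC] at eBC
  rw [hcA] at eU
  rw [hcAB, hcAC, hcABAC] at eD
  have h20 : (2 : ℕ) ^ 0 = 1 := rfl
  have h21 : (2 : ℕ) ^ 1 = 2 := rfl
  have h22 : (2 : ℕ) ^ 2 = 4 := rfl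
  rcases Nat.even_or_odd m with hpar | hpar
  · have hm2 : m % 2 = 0 := Nat.even_iff.mp hpar
    have hAB2 : m / 2 + 1 - (m + 1) / 2 = 1 := by omega
    rw [h21, h22] at eBC
    rw [hAB2, h20, h21] at eD
    omega
  · have hm2 : m % 2 = 1 := Nat.odd_iff.mp hpar
    have hAB2 : m / 2 + 1 - (m + 1) / 2 = 0 := by omega
    rw [h21, h22] at eBC
    rw [hAB2, h20, h21] at eD
    omega

end FixGoodReflAux

open FixGoodReflAux

/-- For even `n ≥ 4`, the number of good binary `n`-tuples fixed by the reflection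
`x ↦ n + 2 - x = 2 - x (mod n)`, which has two fixed points. -/
theorem fix_good_reflection_two (n : ℕ) (hn : 4 ≤ n) (heven : Even n) :
    ({a : ZMod n → Bool | GoodFun n a ∧ ∀ i, a (2 - i) = a i}.ncard : ℤ)
      = if n % 4 = 0 then 2 ^ ((n + 2) / 2) - 2 ^ ((n + 8) / 4) + 1
        else 2 ^ ((n + 2) / 2) - 2 ^ ((n + 6) / 4) := by
  classical
  obtain ⟨m', hm'⟩ := heven
  set m := n / 2 with hmdef
  have hnm : n = 2 * m := by omega
  have hm : 2 ≤ m := by omega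
  have hm0 : 0 < m := by omega
  haveI : NeZero n := ⟨by omega⟩
  have hseteq : {a : ZMod n → Bool | GoodFun n a ∧ ∀ i, a (2 - i) = a i}
      = Phi n m '' {c | ¬ BadC m c} := by
    ext a
    simp only [Set.mem_setOf_eq, Set.mem_image]
    constructor
    · rintro ⟨hg, hs⟩
      refine ⟨fun j => a (1 + ((j : ℕ) : ZMod n)), ?_, Phi_surj hnm hm0 hs⟩
      intro hb
      have h2 := (notGood_iff hnm hm _).mpr hb
      rw [Phi_surj hnm hm0 hs] at h2
      exact h2 hg
    · rintro ⟨c, hc, rfl⟩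
      refine ⟨?_, fun i => Phi_symm hnm hm0 c i⟩
      by_contra hng
      exact hc ((notGood_iff hnm hm c).mp hng)
  rw [hseteq, Set.ncard_image_of_injective _ (Phi_inj hnm hm0)]
  have hcompl : {c : Fin (m + 1) → Bool | ¬ BadC m c} = {c : Fin (m + 1) → Bool | BadC m c}ᶜ := by
    ext c; simp
  have htot : {c : Fin (m + 1) → Bool | BadC m c}.ncard
      + {c : Fin (m + 1) → Bool | ¬ BadC m c}.ncard = 2 ^ (m + 1) := by
    rw [hcompl, Set.ncard_add_ncard_compl _ (Set.toFinite _) (Set.toFinite _),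
      Nat.card_eq_fintype_card, Fintype.card_fun, Fintype.card_bool, Fintype.card_fin]
  have hbad := badC_ncard m hm
  rcases Nat.even_or_odd m with hpar | hpar
  · have hm2 : m % 2 = 0 := Nat.even_iff.mp hpar
    have h4 : n % 4 = 0 := by omega
    rw [if_pos h4]
    have he1 : (n + 2) / 2 = m + 1 := by omega
    have he2 : (n + 8) / 4 = m / 2 + 2 := by omega
    rw [he1, he2]
    have hps : (2 : ℤ) ^ (m / 2 + 2) = 2 ^ (m / 2 + 1) + 2 ^ (m / 2 + 1) := by ring
    rw [hps]
    have h1 : {c : Fin (m + 1) → Bool | ¬ BadC m c}.ncard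
        + (2 ^ (m / 2 + 1) + 2 ^ (m / 2 + 1)) = 2 ^ (m + 1) + 1 := by omega
    zify at h1
    omega
  · have hm2 : m % 2 = 1 := Nat.odd_iff.mp hpar
    have h4 : ¬ (n % 4 = 0) := by omega
    rw [if_neg h4]
    have he1 : (n + 2) / 2 = m + 1 := by omega
    have he2 : (n + 6) / 4 = m / 2 + 2 := by omega
    rw [he1, he2]
    have hps : (2 : ℤ) ^ (m / 2 + 2) = 2 ^ (m / 2 + 1) + 2 ^ (m / 2 + 1) := by ring
    rw [hps]
    have h1 : {c : Fin (m + 1) → Bool | ¬ BadC m c}.ncard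
        + (2 ^ (m / 2 + 1) + 2 ^ (m / 2 + 1)) = 2 ^ (m + 1) := by omega
    zify at h1
    omega
end
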